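/- arXiv:1406.0992 — 11 statements merged into one kernel-verified Lean document; each statement's English description precedes it below -/
import Mathlib

section
/- If C is an N×N real matrix all of whose off-diagonal entries are positive, then for every t > 0 all entries of the matrix exponential exp(t·C) are positive. -/
open Matrix

attribute [local instance] Matrix.linftyOpNormedRing Matrix.linftyOpNormedAlgebra

private lemma pow_entry_nonneg {N : ℕ} (B : Matrix (Fin N) (Fin N) ℝ)
    (hB : ∀ i j, 0 ≤ B i j) : ∀ (n : ℕ) (i j), 0 ≤ (B ^ n) i j := by
  intro n
  induction n with
  | zero => intro i j; simp [Matrix.one_apply]; positivity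
  | succ n ih =>
    intro i j
    rw [pow_succ, Matrix.mul_apply]
    exact Finset.sum_nonneg fun k _ => mul_nonneg (ih i k) (hB k j)

private lemma exp_entry_pos {N : ℕ} (B : Matrix (Fin N) (Fin N) ℝ)
    (hB : ∀ i j, 0 ≤ B i j) (hBoff : ∀ i j, i ≠ j → 0 < B i j) (i j : Fin N) :
    0 < NormedSpace.exp B i j := by
  have hsum : Summable (fun n : ℕ => (n.factorial : ℝ)⁻¹ • B ^ n) :=
    NormedSpace.expSeries_summable' (𝕂 := ℝ) B
  -- entry evaluation as a continuous linear map
  let e : Matrix (Fin N) (Fin N) ℝ →ₗ[ℝ] ℝ :=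
    { toFun := fun M => M i j
      map_add' := fun M M' => rfl
      map_smul' := fun c M => rfl }
  have he : Continuous e := LinearMap.continuous_of_finiteDimensional e
  have key : NormedSpace.exp B i j = ∑' n : ℕ, (n.factorial : ℝ)⁻¹ * (B ^ n) i j := by
    rw [NormedSpace.exp_eq_tsum (𝕂 := ℝ)]
    exact (hsum.hasSum.map e he).tsum_eq.symm
  rw [key]
  have hnn : ∀ n : ℕ, 0 ≤ (n.factorial : ℝ)⁻¹ * (B ^ n) i j := fun n =>
    mul_nonneg (by positivity) (pow_entry_nonneg B hB n i j)
  have hsum' : Summable fun n : ℕ => (n.factorial : ℝ)⁻¹ * (B ^ n) i j :=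
    hsum.hasSum.map e he |>.summable
  by_cases hij : i = j
  · refine Summable.tsum_pos hsum' hnn 0 ?_
    subst hij
    simp [Matrix.one_apply]
  · refine Summable.tsum_pos hsum' hnn 1 ?_
    simp only [pow_one, Nat.factorial_one, Nat.cast_one, Nat.cast_ofNat, inv_one, one_mul]
    exact hBoff i j hij

/-- If `C` is an `N×N` real matrix all of whose off-diagonal entries are positive,
then for every `t > 0` all entries of `exp (t • C)` are positive. -/
theorem stmt_0 {N : ℕ} (hN : 1 ≤ N) (C : Matrix (Fin N) (Fin N) ℝ)
    (hC : ∀ i j, i ≠ j → 0 < C i j) :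
    ∀ t : ℝ, 0 < t → ∀ i j, 0 < NormedSpace.exp (t • C) i j := by
  intro t ht i j
  set c : ℝ := ∑ k, |C k k| with hc
  have hcnn : ∀ k : Fin N, |C k k| ≤ c :=
    fun k => Finset.single_le_sum (f := fun k => |C k k|) (fun _ _ => abs_nonneg _)
      (Finset.mem_univ k)
  set A : Matrix (Fin N) (Fin N) ℝ := C + c • (1 : Matrix (Fin N) (Fin N) ℝ) with hA
  have hAnn : ∀ i j, 0 ≤ A i j := by
    intro a b
    by_cases hab : a = b
    · subst hab
      simp only [hA, Matrix.add_apply, Matrix.smul_apply, Matrix.one_apply_eq, smul_eq_mul,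
        mul_one]
      have := hcnn a
      have := neg_abs_le (C a a)
      linarith
    · simp only [hA, Matrix.add_apply, Matrix.smul_apply, Matrix.one_apply_ne hab, smul_eq_mul,
        mul_zero, add_zero]
      exact (hC a b hab).le
  have hAoff : ∀ i j, i ≠ j → 0 < A i j := by
    intro a b hab
    simp only [hA, Matrix.add_apply, Matrix.smul_apply, Matrix.one_apply_ne hab, smul_eq_mul,
      mul_zero, add_zero]
    exact hC a b hab
  have hdecomp : t • C = t • A + (-(t * c)) • (1 : Matrix (Fin N) (Fin N) ℝ) := by
    rw [hA]
    module
  have hcomm : Commute (t • A) ((-(t * c)) • (1 : Matrix (Fin N) (Fin N) ℝ)) := by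
    apply Commute.smul_left
    apply Commute.smul_right
    exact Commute.one_right A
  have hexp : NormedSpace.exp (t • C)
      = NormedSpace.exp (t • A) * NormedSpace.exp ((-(t * c)) • (1 : Matrix (Fin N) (Fin N) ℝ)) := by
    rw [hdecomp]
    exact Matrix.exp_add_of_commute _ _ hcomm
  have h1 : (-(t * c)) • (1 : Matrix (Fin N) (Fin N) ℝ)
      = Matrix.diagonal (fun _ => -(t * c)) := by
    exact Matrix.smul_one_eq_diagonal _
  have hexp1 : NormedSpace.exp ((-(t * c)) • (1 : Matrix (Fin N) (Fin N) ℝ))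
      = Matrix.diagonal (fun _ => Real.exp (-(t * c))) := by
    rw [h1, Matrix.exp_diagonal]
    congr 1
    rw [Pi.exp_def]
    funext k
    rw [Real.exp_eq_exp_ℝ]
  rw [hexp, hexp1, Matrix.mul_diagonal]
  exact mul_pos (exp_entry_pos (t • A)
    (fun a b => smul_nonneg ht.le (hAnn a b))
    (fun a b hab => by
      simp only [Matrix.smul_apply, smul_eq_mul]
      exact mul_pos ht (hAoff a b hab)) i j) (Real.exp_pos _)
end

section
/- Let C be a real N×N matrix with all off-diagonal entries positive. If there exists a vector w with all coordinates positive such that (C w) i ≤ 0 for every i, then every real eigenvalue of C is nonpositive. -/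
open Matrix

lemma key_aux {N : ℕ} (C : Matrix (Fin N) (Fin N) ℝ)
    (hC : ∀ i j, i ≠ j → 0 < C i j)
    (w : Fin N → ℝ) (hw : ∀ i, 0 < w i)
    (hCw : ∀ i, C.mulVec w i ≤ 0)
    (lam : ℝ) (hlam : 0 < lam)
    (y : Fin N → ℝ) (hEig : C.mulVec y = lam • y)
    (j : Fin N) (hj : 0 < y j) : False := by
  have hNe : (Finset.univ : Finset (Fin N)).Nonempty := ⟨j, Finset.mem_univ j⟩
  obtain ⟨i0, _, hi0⟩ := Finset.exists_max_image Finset.univ (fun i => y i / w i) hNe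
  set r := y i0 / w i0 with hr
  have hrpos : 0 < r := lt_of_lt_of_le (div_pos hj (hw j)) (hi0 j (Finset.mem_univ j))
  have hle : ∀ i, y i ≤ r * w i := by
    intro i
    have h1 := hi0 i (Finset.mem_univ i)
    have h2 : y i = (y i / w i) * w i := (div_mul_cancel₀ _ (hw i).ne').symm
    nlinarith [hw i]
  have heq : y i0 = r * w i0 := by
    rw [hr]; exact (div_mul_cancel₀ _ (hw i0).ne').symm
  have hsum : C.mulVec y i0 ≤ r * C.mulVec w i0 := by
    simp only [Matrix.mulVec, dotProduct]
    rw [Finset.mul_sum]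
    apply Finset.sum_le_sum
    intro k _
    by_cases hk : k = i0
    · subst hk; rw [heq]; ring_nf; exact le_refl _
    · have hCk := hC i0 k (Ne.symm hk)
      nlinarith [hle k]
  have h1 : C.mulVec y i0 = lam * y i0 := by rw [hEig]; simp
  have h2 : 0 < lam * y i0 := by rw [heq]; exact mul_pos hlam (mul_pos hrpos (hw i0))
  have h3 : r * C.mulVec w i0 ≤ 0 :=
    mul_nonpos_of_nonneg_of_nonpos hrpos.le (hCw i0)
  linarith

/-- If `C` has positive off-diagonal entries and there is a positive vector `w`
with `(C w) i ≤ 0` for all `i`, then every real eigenvalue of `C` is nonpositive. -/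
theorem stmt_2 {N : ℕ} (C : Matrix (Fin N) (Fin N) ℝ)
    (hC : ∀ i j, i ≠ j → 0 < C i j)
    (w : Fin N → ℝ) (hw : ∀ i, 0 < w i)
    (hCw : ∀ i, C.mulVec w i ≤ 0) :
    ∀ lam : ℝ, (∃ x : Fin N → ℝ, x ≠ 0 ∧ C.mulVec x = lam • x) → lam ≤ 0 := by
  rintro lam ⟨x, hx, hEig⟩
  by_contra hlam
  push_neg at hlam
  obtain ⟨j, hj⟩ : ∃ j, x j ≠ 0 := by
    by_contra h; push_neg at h; exact hx (funext h)
  rcases hj.lt_or_gt with h | h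
  · have hEig' : C.mulVec (-x) = lam • (-x) := by
      rw [Matrix.mulVec_neg, hEig, smul_neg]
    exact key_aux C hC w hw hCw lam hlam (-x) hEig' j (by simpa using h)
  · exact key_aux C hC w hw hCw lam hlam x hEig j h
end

section
/- Let C be a real N×N matrix with nonnegative off-diagonal entries. Then the largest real eigenvalue λ of C (which exists) satisfies λ ≥ min_i ∑_j C i j, the minimum of the row sums of C. -/
open Matrix

attribute [local instance] Matrix.linftyOpNormedAddCommGroup Matrix.linftyOpNormedRing
  Matrix.linftyOpNormedAlgebra

section BanachAux

variable {A : Type*} [NormedRing A] [NormedAlgebra ℂ A] [CompleteSpace A]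

/-- Neumann series for `(1 - z • a)⁻¹` inside the inverse spectral radius. -/
lemma pf_hasSum_inverse (a : A) (z : ℂ) (hz : (‖z‖₊ : ENNReal) < (spectralRadius ℂ a)⁻¹) :
    HasSum (fun n : ℕ => z ^ n • a ^ n) (Ring.inverse (1 - z • a)) := by
  obtain ⟨r, hr1, hr2⟩ := ENNReal.lt_iff_exists_nnreal_btwn.mp hz
  have r_pos : 0 < r := lt_of_le_of_lt zero_le (by exact_mod_cast hr1)
  have H₁ := (spectrum.differentiableOn_inverse_one_sub_smul (𝕜 := ℂ) hr2).hasFPowerSeriesOnBall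
    r_pos
  have H₂ := (spectrum.hasFPowerSeriesOnBall_inverse_one_sub_smul ℂ a).exchange_radius H₁
  have hmem : z ∈ Metric.eball (0 : ℂ) r := by
    rw [Metric.mem_eball, edist_zero_right]
    exact_mod_cast hr1
  have := H₂.hasSum hmem
  simpa [ContinuousMultilinearMap.mkPiRing_apply] using this

end BanachAux

section MatrixAux

variable {N : ℕ}

lemma pf_entry_norm_le (M : Matrix (Fin N) (Fin N) ℂ) (i j : Fin N) : ‖M i j‖ ≤ ‖M‖ := by
  have h : ‖M i j‖₊ ≤ ‖M‖₊ := by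
    rw [Matrix.linfty_opNNNorm_def]
    exact le_trans (Finset.single_le_sum (f := fun k => ‖M i k‖₊)
      (fun _ _ => zero_le) (Finset.mem_univ j))
      (Finset.le_sup (f := fun i => ∑ j, ‖M i j‖₊) (Finset.mem_univ i))
  exact_mod_cast h

lemma pf_norm_le_of_entries (M : Matrix (Fin N) (Fin N) ℂ) (c : ℝ) (hc : 0 ≤ c)
    (h : ∀ i j, ‖M i j‖ ≤ c) : ‖M‖ ≤ N * c := by
  rw [Matrix.linfty_opNorm_def]
  have : ((Finset.univ : Finset (Fin N)).sup fun i => ∑ j, ‖M i j‖₊ : NNReal) ≤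
      ⟨N * c, by positivity⟩ := by
    apply Finset.sup_le
    intro i _
    have : (∑ j, ‖M i j‖₊ : ℝ) ≤ N * c := by
      push_cast
      calc ∑ j, ‖M i j‖ ≤ ∑ _j : Fin N, c := Finset.sum_le_sum fun j _ => h i j
      _ = N * c := by simp [mul_comm]
    exact_mod_cast this
  exact_mod_cast this

noncomputable def pf_entryCLM (i j : Fin N) : Matrix (Fin N) (Fin N) ℂ →L[ℂ] ℂ :=
  LinearMap.mkContinuous
    { toFun := fun M => M i j
      map_add' := fun _ _ => rfl
      map_smul' := fun _ _ => rfl } 1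
    (fun M => by rw [one_mul]; exact pf_entry_norm_le M i j)

@[simp] lemma pf_entryCLM_apply (i j : Fin N) (M : Matrix (Fin N) (Fin N) ℂ) :
    pf_entryCLM i j M = M i j := rfl

lemma pf_pow_entry_nonneg {A : Matrix (Fin N) (Fin N) ℝ} (hA : ∀ i j, 0 ≤ A i j) :
    ∀ (n : ℕ) (i j : Fin N), 0 ≤ (A ^ n) i j := by
  intro n
  induction n with
  | zero => intro i j; by_cases h : i = j <;> simp [pow_zero, Matrix.one_apply, h]
  | succ n ih =>
    intro i j
    rw [pow_succ', Matrix.mul_apply]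
    exact Finset.sum_nonneg fun k _ => mul_nonneg (hA i k) (ih k j)

lemma pf_pow_rowsum_ge {A : Matrix (Fin N) (Fin N) ℝ} (hA : ∀ i j, 0 ≤ A i j)
    {m : ℝ} (hm0 : 0 ≤ m) (hm : ∀ i, m ≤ ∑ j, A i j) :
    ∀ (n : ℕ) (i : Fin N), m ^ n ≤ ∑ j, (A ^ n) i j := by
  intro n
  induction n with
  | zero => intro i; simp [pow_zero, Matrix.one_apply]
  | succ n ih =>
    intro i
    have hsum : ∑ j, (A ^ (n + 1)) i j = ∑ k, A i k * ∑ j, (A ^ n) k j := by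
      simp_rw [pow_succ', Matrix.mul_apply, Finset.mul_sum]
      rw [Finset.sum_comm]
    rw [hsum, pow_succ]
    calc m ^ n * m = m * m ^ n := mul_comm _ _
    _ ≤ (∑ k, A i k) * m ^ n := mul_le_mul_of_nonneg_right (hm i) (pow_nonneg hm0 n)
    _ = ∑ k, A i k * m ^ n := Finset.sum_mul ..
    _ ≤ ∑ k, A i k * ∑ j, (A ^ n) k j :=
        Finset.sum_le_sum fun k _ => mul_le_mul_of_nonneg_left (ih k) (hA i k)

lemma pf_entry_hasSum {A : Matrix (Fin N) (Fin N) ℝ} (s : ℝ)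
    {S : Matrix (Fin N) (Fin N) ℂ}
    (H : HasSum (fun n : ℕ => ((s : ℂ)) ^ n • (Complex.ofRealHom.mapMatrix A) ^ n) S)
    (i j : Fin N) :
    HasSum (fun n : ℕ => s ^ n * (A ^ n) i j) ((S i j).re) := by
  have h1 := ((pf_entryCLM i j).hasSum H)
  have h2 := (Complex.reCLM.hasSum h1)
  have hterm : ∀ n : ℕ, Complex.reCLM ((pf_entryCLM i j)
      (((s : ℂ)) ^ n • (Complex.ofRealHom.mapMatrix A) ^ n)) = s ^ n * (A ^ n) i j := by
    intro n
    have hpow : (Complex.ofRealHom.mapMatrix A) ^ n = Complex.ofRealHom.mapMatrix (A ^ n) :=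
      (map_pow (Complex.ofRealHom.mapMatrix) A n).symm
    rw [pf_entryCLM_apply, hpow]
    simp [RingHom.mapMatrix_apply, Matrix.map_apply, Matrix.smul_apply, smul_eq_mul,
      ← Complex.ofReal_pow, ← Complex.ofReal_mul]
  simp only [hterm] at h2
  exact h2

lemma pf_norm_entry_le {A : Matrix (Fin N) (Fin N) ℝ} (hA : ∀ i j, 0 ≤ A i j)
    (z : ℂ) (s : ℝ) (hs : ‖z‖ = s)
    {Sz Ss : Matrix (Fin N) (Fin N) ℂ}
    (Hz : HasSum (fun n : ℕ => z ^ n • (Complex.ofRealHom.mapMatrix A) ^ n) Sz)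
    (Hs : HasSum (fun n : ℕ => ((s : ℂ)) ^ n • (Complex.ofRealHom.mapMatrix A) ^ n) Ss)
    (i j : Fin N) : ‖Sz i j‖ ≤ ‖Ss‖ := by
  have hz_ij := (pf_entryCLM i j).hasSum Hz
  have hs_ij := pf_entry_hasSum s Hs i j
  have hnorm : ∀ n : ℕ, ‖(pf_entryCLM i j) (z ^ n • (Complex.ofRealHom.mapMatrix A) ^ n)‖
      = s ^ n * (A ^ n) i j := by
    intro n
    have hpow : (Complex.ofRealHom.mapMatrix A) ^ n = Complex.ofRealHom.mapMatrix (A ^ n) :=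
      (map_pow (Complex.ofRealHom.mapMatrix) A n).symm
    rw [pf_entryCLM_apply, hpow]
    simp only [RingHom.mapMatrix_apply, Matrix.smul_apply, Matrix.map_apply, smul_eq_mul,
      norm_mul, norm_pow, hs, Complex.ofRealHom_eq_coe, Complex.norm_real, Real.norm_eq_abs]
    rw [abs_of_nonneg (pf_pow_entry_nonneg hA n i j)]
  have hsummable : Summable fun n : ℕ =>
      ‖(pf_entryCLM i j) (z ^ n • (Complex.ofRealHom.mapMatrix A) ^ n)‖ := by
    apply Summable.congr hs_ij.summable
    intro n; exact (hnorm n).symm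
  calc ‖Sz i j‖ = ‖∑' n, (pf_entryCLM i j) (z ^ n • (Complex.ofRealHom.mapMatrix A) ^ n)‖ := by
        rw [hz_ij.tsum_eq]; rfl
    _ ≤ ∑' n, ‖(pf_entryCLM i j) (z ^ n • (Complex.ofRealHom.mapMatrix A) ^ n)‖ :=
        norm_tsum_le_tsum_norm hsummable
    _ = ∑' n, s ^ n * (A ^ n) i j := tsum_congr hnorm
    _ = (Ss i j).re := hs_ij.tsum_eq
    _ ≤ ‖Ss i j‖ := Complex.re_le_norm _
    _ ≤ ‖Ss‖ := pf_entry_norm_le Ss i j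

lemma pf_mem_spectrum_iff [NeZero N] (μ : ℂ) (M : Matrix (Fin N) (Fin N) ℂ) :
    μ ∈ spectrum ℂ M ↔ ∃ x : Fin N → ℂ, x ≠ 0 ∧ M.mulVec x = μ • x := by
  rw [spectrum.mem_iff, Matrix.isUnit_iff_isUnit_det, isUnit_iff_ne_zero, not_not,
    ← Matrix.exists_mulVec_eq_zero_iff]
  constructor
  · rintro ⟨v, hv, hv0⟩
    refine ⟨v, hv, ?_⟩
    rw [Matrix.sub_mulVec, sub_eq_zero, Algebra.algebraMap_eq_smul_one,
      Matrix.smul_mulVec, Matrix.one_mulVec] at hv0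
    exact hv0.symm
  · rintro ⟨v, hv, hv0⟩
    refine ⟨v, hv, ?_⟩
    rw [Matrix.sub_mulVec, sub_eq_zero, Algebra.algebraMap_eq_smul_one,
      Matrix.smul_mulVec, Matrix.one_mulVec, hv0]

end MatrixAux

set_option maxHeartbeats 1000000 in
lemma pf_main {N : ℕ} (hN : 0 < N) (A : Matrix (Fin N) (Fin N) ℝ)
    (hA : ∀ i j, 0 ≤ A i j) :
    ∃ ρ : ℝ, 0 ≤ ρ ∧ ((ρ : ℂ) ∈ spectrum ℂ (Complex.ofRealHom.mapMatrix A)) ∧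
      (∀ μ ∈ spectrum ℂ (Complex.ofRealHom.mapMatrix A), ‖μ‖ ≤ ρ) ∧
      ∃ i, ∑ j, A i j ≤ ρ := by
  haveI : NeZero N := ⟨hN.ne'⟩
  haveI : Nonempty (Fin N) := ⟨⟨0, hN⟩⟩
  haveI : CompleteSpace (Matrix (Fin N) (Fin N) ℂ) := FiniteDimensional.complete ℂ _
  set Aℂ := Complex.ofRealHom.mapMatrix A with hAℂdef
  have hne : (spectrum ℂ Aℂ).Nonempty := spectrum.nonempty Aℂ
  have hcpt : IsCompact (spectrum ℂ Aℂ) := spectrum.isCompact Aℂ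
  obtain ⟨μ₀, hμ₀mem, hmax'⟩ := hcpt.exists_isMaxOn hne continuous_norm.continuousOn
  have hmax : ∀ μ ∈ spectrum ℂ Aℂ, ‖μ‖ ≤ ‖μ₀‖ := fun μ hμ => hmax' hμ
  set ρ := ‖μ₀‖ with hρdef
  have hρ0 : 0 ≤ ρ := norm_nonneg _
  have hsr : spectralRadius ℂ Aℂ ≤ (‖μ₀‖₊ : ENNReal) := by
    apply iSup₂_le
    intro k hk
    exact_mod_cast hmax k hk
  -- the Neumann series applies whenever `‖z‖ * ρ < 1`
  have key : ∀ z : ℂ, ‖z‖ * ρ < 1 →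
      HasSum (fun n : ℕ => z ^ n • Aℂ ^ n) (Ring.inverse (1 - z • Aℂ)) := by
    intro z hz
    apply pf_hasSum_inverse
    have h1 : (‖z‖₊ : ENNReal) < ((‖μ₀‖₊ : ENNReal))⁻¹ := by
      rcases eq_or_lt_of_le hρ0 with h0 | hpos
      · have hμ0 : ‖μ₀‖₊ = 0 := by
          rw [nnnorm_eq_zero, ← norm_eq_zero, ← hρdef, ← h0]
        rw [hμ0]
        simp
      · have hzρ : ‖z‖ < ρ⁻¹ := by
          rw [← one_div, lt_div_iff₀ hpos] at *
          exact hz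
        have hne0 : ‖μ₀‖₊ ≠ 0 := by
          apply nnnorm_ne_zero_iff.mpr
          intro h
          rw [hρdef, h, norm_zero] at hpos
          exact lt_irrefl _ hpos
        rw [← ENNReal.coe_inv hne0, ENNReal.coe_lt_coe, ← NNReal.coe_lt_coe, NNReal.coe_inv,
          coe_nnnorm, coe_nnnorm]
        exact hzρ
    exact lt_of_lt_of_le h1 (ENNReal.inv_le_inv.mpr hsr)
  -- Part 3: some row sum is at most ρ
  have part3 : ∃ i, ∑ j, A i j ≤ ρ := by
    by_contra hcon
    push_neg at hcon
    obtain ⟨i₀, -, hi₀⟩ := Finset.exists_mem_eq_inf' (Finset.univ_nonempty)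
      (fun i => ∑ j, A i j)
    set m := Finset.univ.inf' Finset.univ_nonempty (fun i => ∑ j, A i j) with hm
    have hρm : ρ < m := by rw [hi₀]; exact hcon i₀
    have hminle : ∀ i, m ≤ ∑ j, A i j := fun i => Finset.inf'_le _ (Finset.mem_univ i)
    have hm0 : 0 ≤ m := le_of_lt (lt_of_le_of_lt hρ0 hρm)
    set r := (ρ + m) / 2 with hr
    have hρr : ρ < r := by rw [hr]; linarith
    have hrm : r < m := by rw [hr]; linarith
    have hr0 : 0 < r := lt_of_le_of_lt hρ0 hρr
    have hz : ‖((r⁻¹ : ℝ) : ℂ)‖ * ρ < 1 := by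
      rw [Complex.norm_real, Real.norm_eq_abs, abs_of_pos (inv_pos.mpr hr0)]
      calc r⁻¹ * ρ < r⁻¹ * r := mul_lt_mul_of_pos_left hρr (inv_pos.mpr hr0)
      _ = 1 := inv_mul_cancel₀ hr0.ne'
    have HS := key _ hz
    have hrow := hasSum_sum (s := (Finset.univ : Finset (Fin N)))
      (f := fun j n => r⁻¹ ^ n * (A ^ n) i₀ j)
      (fun j _ => pf_entry_hasSum r⁻¹ HS i₀ j)
    have htend := hrow.summable.tendsto_atTop_zero
    have hge : ∀ n, (1 : ℝ) ≤ ∑ j, r⁻¹ ^ n * (A ^ n) i₀ j := by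
      intro n
      have h1 : m ^ n ≤ ∑ j, (A ^ n) i₀ j := pf_pow_rowsum_ge hA hm0 hminle n i₀
      calc (1 : ℝ) ≤ (m / r) ^ n := one_le_pow₀ ((one_le_div hr0).mpr hrm.le)
      _ = r⁻¹ ^ n * m ^ n := by
          rw [div_pow, div_eq_mul_inv, ← inv_pow, mul_comm]
      _ ≤ ∑ j, r⁻¹ ^ n * (A ^ n) i₀ j := by
          rw [← Finset.mul_sum]
          exact mul_le_mul_of_nonneg_left h1 (by positivity)
    obtain ⟨n, hn⟩ := (htend.eventually_lt_const zero_lt_one).exists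
    exact absurd (hge n) (not_le.mpr hn)
  -- Part A : ρ belongs to the spectrum
  have partA : (ρ : ℂ) ∈ spectrum ℂ Aℂ := by
    rcases eq_or_lt_of_le hρ0 with h0 | hρpos
    · have hμ0 : μ₀ = 0 := by
        rw [← norm_eq_zero, ← hρdef, ← h0]
      have : ((ρ : ℝ) : ℂ) = μ₀ := by rw [hμ0, ← h0]; simp
      rw [this]
      exact hμ₀mem
    · by_contra hρσ
      have hμ₀ne : μ₀ ≠ 0 := by
        intro h
        rw [hρdef, h, norm_zero] at hρpos
        exact lt_irrefl _ hρpos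
      have hone_sub_unit : ∀ z : ℂ, z ≠ 0 → z⁻¹ ∉ spectrum ℂ Aℂ →
          IsUnit (1 - z • Aℂ) := by
        intro z hz hnotmem
        have h1 : IsUnit ((z⁻¹) • (1 : Matrix (Fin N) (Fin N) ℂ) - Aℂ) := by
          rw [← Algebra.algebraMap_eq_smul_one]
          exact spectrum.notMem_iff.mp hnotmem
        have h2 : (1 : Matrix (Fin N) (Fin N) ℂ) - z • Aℂ = z • (z⁻¹ • 1 - Aℂ) := by
          rw [smul_sub, smul_smul, mul_inv_cancel₀ hz, one_smul]
        rw [h2, Algebra.smul_def]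
        exact ((isUnit_iff_ne_zero.mpr hz).map
          (algebraMap ℂ (Matrix (Fin N) (Fin N) ℂ))).mul h1
      -- the point z₀ = ρ⁻¹ on the positive real axis
      have hz₀ne : (((ρ⁻¹ : ℝ) : ℂ)) ≠ 0 := by
        exact_mod_cast (inv_pos.mpr hρpos).ne'
      have hz₀notmem : (((ρ⁻¹ : ℝ) : ℂ))⁻¹ ∉ spectrum ℂ Aℂ := by
        have : (((ρ⁻¹ : ℝ) : ℂ))⁻¹ = ((ρ : ℝ) : ℂ) := by
          push_cast
          rw [inv_inv]
        rw [this]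
        exact hρσ
      have hu₀ : IsUnit (1 - (((ρ⁻¹ : ℝ) : ℂ)) • Aℂ) := hone_sub_unit _ hz₀ne hz₀notmem
      have hcont : ContinuousAt (fun z : ℂ => Ring.inverse (1 - z • Aℂ)) ((ρ⁻¹ : ℝ) : ℂ) := by
        have h1 : Continuous (fun z : ℂ => 1 - z • Aℂ) :=
          continuous_const.sub (continuous_id.smul continuous_const)
        have h2 : ContinuousAt Ring.inverse ((fun z : ℂ => 1 - z • Aℂ) ((ρ⁻¹ : ℝ) : ℂ)) := by
          simp only
          rw [← hu₀.unit_spec]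
          exact NormedRing.inverse_continuousAt hu₀.unit
        exact ContinuousAt.comp (x := (((ρ⁻¹ : ℝ) : ℂ))) h2 h1.continuousAt
      obtain ⟨δ, hδ0, hδ⟩ := Metric.continuousAt_iff.mp hcont 1 one_pos
      set Mb := ‖Ring.inverse (1 - (((ρ⁻¹ : ℝ) : ℂ)) • Aℂ)‖ + 1 with hMbdef
      have hMb0 : 0 < Mb := by positivity
      have hbound : ∀ x : ℂ, dist x (((ρ⁻¹ : ℝ) : ℂ)) < δ →
          ‖Ring.inverse (1 - x • Aℂ)‖ ≤ Mb := by
        intro x hx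
        have h3 := hδ hx
        rw [dist_eq_norm] at h3
        have h4 := norm_sub_norm_le (Ring.inverse (1 - x • Aℂ))
          (Ring.inverse (1 - (((ρ⁻¹ : ℝ) : ℂ)) • Aℂ))
        rw [hMbdef]
        linarith
      set K := (N : ℝ) * Mb with hKdef
      have hK0 : 0 < K := mul_pos (by exact_mod_cast hN) hMb0
      set c := min δ (K⁻¹ / (‖Aℂ‖ + 1)) with hcdef
      have hc0 : 0 < c := lt_min hδ0 (div_pos (inv_pos.mpr hK0) (by positivity))
      set r := ρ + ρ ^ 2 * c / 2 with hrdef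
      have hρr : ρ < r := by
        have h0 : 0 < ρ ^ 2 * c / 2 := by positivity
        rw [hrdef]; linarith
      have hr0 : 0 < r := hρpos.trans hρr
      have hrρsub : r - ρ = ρ ^ 2 * c / 2 := by rw [hrdef]; ring
      -- the two evaluation points
      have hxr_norm : ‖((r⁻¹ : ℝ) : ℂ)‖ = r⁻¹ := by
        rw [Complex.norm_real, Real.norm_eq_abs, abs_of_pos (inv_pos.mpr hr0)]
      have hzr_norm : ‖(((ρ / r : ℝ) : ℂ)) * μ₀⁻¹‖ = r⁻¹ := by
        rw [norm_mul, norm_inv, Complex.norm_real, Real.norm_eq_abs,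
          abs_of_pos (div_pos hρpos hr0), ← hρdef]
        field_simp
      have hzr_ne : (((ρ / r : ℝ) : ℂ)) * μ₀⁻¹ ≠ 0 := by
        intro h
        rw [h, norm_zero] at hzr_norm
        exact (inv_pos.mpr hr0).ne' hzr_norm.symm
      have hmulρ : r⁻¹ * ρ < 1 := by
        rw [← div_eq_inv_mul, div_lt_one hr0]
        exact hρr
      have HSx := key (((r⁻¹ : ℝ) : ℂ)) (by rw [hxr_norm]; exact hmulρ)
      have HSz := key ((((ρ / r : ℝ) : ℂ)) * μ₀⁻¹) (by rw [hzr_norm]; exact hmulρ)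
      -- closeness of the real point to ρ⁻¹
      have hxr_close : dist ((r⁻¹ : ℝ) : ℂ) (((ρ⁻¹ : ℝ) : ℂ)) < δ := by
        rw [dist_eq_norm, ← Complex.ofReal_sub, Complex.norm_real, Real.norm_eq_abs]
        have h1 : r⁻¹ - ρ⁻¹ ≤ 0 := by
          rw [sub_nonpos]
          exact inv_anti₀ hρpos hρr.le
        rw [abs_of_nonpos h1, neg_sub]
        have h2 : ρ⁻¹ - r⁻¹ = (r - ρ) / (ρ * r) := by
          field_simp
        rw [h2, hrρsub, div_lt_iff₀ (by positivity)]
        have hcδ : c ≤ δ := min_le_left _ _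
        have hp : 0 < ρ ^ 2 * c := by positivity
        calc ρ ^ 2 * c / 2 < ρ ^ 2 * c := by linarith
        _ ≤ ρ ^ 2 * δ := mul_le_mul_of_nonneg_left hcδ (by positivity)
        _ = δ * (ρ * ρ) := by ring
        _ ≤ δ * (ρ * r) :=
            mul_le_mul_of_nonneg_left (mul_le_mul_of_nonneg_left hρr.le hρ0) hδ0.le
      -- closeness of zr to μ₀⁻¹
      have hzr_close : ‖(((ρ / r : ℝ) : ℂ)) * μ₀⁻¹ - μ₀⁻¹‖ ≤ c / 2 := by
        have h1 : (((ρ / r : ℝ) : ℂ)) * μ₀⁻¹ - μ₀⁻¹ = (((ρ / r - 1 : ℝ)) : ℂ) * μ₀⁻¹ := by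
          push_cast
          ring
        rw [h1, norm_mul, norm_inv, Complex.norm_real, Real.norm_eq_abs, ← hρdef]
        have h2 : ρ / r - 1 ≤ 0 := by
          rw [sub_nonpos, div_le_one hr0]
          exact hρr.le
        rw [abs_of_nonpos h2, neg_sub]
        have h3 : (1 - ρ / r) * ρ⁻¹ = (r - ρ) / (r * ρ) := by
          field_simp
        rw [h3, hrρsub, div_le_iff₀ (by positivity)]
        calc ρ ^ 2 * c / 2 = c / 2 * (ρ * ρ) := by ring
        _ ≤ c / 2 * (r * ρ) :=
            mul_le_mul_of_nonneg_left (mul_le_mul_of_nonneg_right hρr.le hρ0) (by positivity)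
      -- the unit near μ₀⁻¹
      have hzrinv_norm : ρ < ‖((((ρ / r : ℝ) : ℂ)) * μ₀⁻¹)⁻¹‖ := by
        rw [norm_inv, hzr_norm, inv_inv]
        exact hρr
      have hur : IsUnit (1 - ((((ρ / r : ℝ) : ℂ)) * μ₀⁻¹) • Aℂ) :=
        hone_sub_unit _ hzr_ne
          (fun hmem => absurd (hmax _ hmem) (not_le.mpr hzrinv_norm))
      have hgzr_bound : ‖Ring.inverse (1 - ((((ρ / r : ℝ) : ℂ)) * μ₀⁻¹) • Aℂ)‖ ≤ K := by
        rw [hKdef]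
        apply pf_norm_le_of_entries _ Mb hMb0.le
        intro i j
        exact le_trans (pf_norm_entry_le hA _ r⁻¹ hzr_norm HSz HSx i j)
          (hbound _ hxr_close)
      have hinv_eq : (↑hur.unit⁻¹ : Matrix (Fin N) (Fin N) ℂ)
          = Ring.inverse (1 - ((((ρ / r : ℝ) : ℂ)) * μ₀⁻¹) • Aℂ) := by
        have h := Ring.inverse_unit hur.unit
        rw [hur.unit_spec] at h
        exact h.symm
      have hdiff : ‖(1 - (μ₀⁻¹) • Aℂ) - ↑hur.unit‖
          < ‖(↑hur.unit⁻¹ : Matrix (Fin N) (Fin N) ℂ)‖⁻¹ := by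
        have hval : (↑hur.unit : Matrix (Fin N) (Fin N) ℂ)
            = 1 - ((((ρ / r : ℝ) : ℂ)) * μ₀⁻¹) • Aℂ := hur.unit_spec
        rw [hval]
        have h1 : (1 - (μ₀⁻¹) • Aℂ) - (1 - ((((ρ / r : ℝ) : ℂ)) * μ₀⁻¹) • Aℂ)
            = ((((ρ / r : ℝ) : ℂ)) * μ₀⁻¹ - μ₀⁻¹) • Aℂ := by
          rw [sub_sub_sub_cancel_left, ← sub_smul]
        rw [h1, norm_smul]
        have h2 : ‖(↑hur.unit⁻¹ : Matrix (Fin N) (Fin N) ℂ)‖ ≤ K := by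
          rw [hinv_eq]
          exact hgzr_bound
        have hpos : 0 < ‖(↑hur.unit⁻¹ : Matrix (Fin N) (Fin N) ℂ)‖ := Units.norm_pos _
        have h3 : K⁻¹ ≤ ‖(↑hur.unit⁻¹ : Matrix (Fin N) (Fin N) ℂ)‖⁻¹ :=
          inv_anti₀ hpos h2
        have hcK : c * (‖Aℂ‖ + 1) ≤ K⁻¹ := by
          have h := min_le_right δ (K⁻¹ / (‖Aℂ‖ + 1))
          exact (le_div_iff₀ (by positivity : (0:ℝ) < ‖Aℂ‖ + 1)).mp h
        calc ‖(((ρ / r : ℝ) : ℂ)) * μ₀⁻¹ - μ₀⁻¹‖ * ‖Aℂ‖ ≤ (c / 2) * ‖Aℂ‖ :=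
            mul_le_mul_of_nonneg_right hzr_close (norm_nonneg _)
        _ < K⁻¹ := by nlinarith [norm_nonneg Aℂ]
        _ ≤ _ := h3
      have hyunit : IsUnit (1 - (μ₀⁻¹) • Aℂ) := (hur.unit.ofNearby _ hdiff).isUnit
      have hfinal : IsUnit (μ₀ • (1 : Matrix (Fin N) (Fin N) ℂ) - Aℂ) := by
        have h5 : μ₀ • (1 : Matrix (Fin N) (Fin N) ℂ) - Aℂ = μ₀ • (1 - μ₀⁻¹ • Aℂ) := by
          rw [smul_sub, smul_smul, mul_inv_cancel₀ hμ₀ne, one_smul]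
        rw [h5, Algebra.smul_def]
        exact ((isUnit_iff_ne_zero.mpr hμ₀ne).map
          (algebraMap ℂ (Matrix (Fin N) (Fin N) ℂ))).mul hyunit
      rw [← Algebra.algebraMap_eq_smul_one] at hfinal
      exact (spectrum.notMem_iff.mpr hfinal) hμ₀mem
  exact ⟨ρ, hρ0, partA, fun μ hμ => hmax μ hμ, part3⟩

/-- If `C` has nonnegative off-diagonal entries, then `C` has a real eigenvalue
`lam` dominating the real parts of all complex eigenvalues, and `lam` is at
least the minimum of the row sums of `C` (i.e. some row sum is `≤ lam`,
equivalently `min_i ∑_j C i j ≤ lam`). -/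
theorem stmt_7 {N : ℕ} (hN : 0 < N) (C : Matrix (Fin N) (Fin N) ℝ)
    (hC : ∀ i j, i ≠ j → 0 ≤ C i j) :
    ∃ lam : ℝ, (∃ x : Fin N → ℝ, x ≠ 0 ∧ C.mulVec x = lam • x) ∧
      (∀ μ : ℂ, (∃ x : Fin N → ℂ, x ≠ 0 ∧
        (C.map (Complex.ofReal ·)).mulVec x = μ • x) → μ.re ≤ lam) ∧
      (∃ i : Fin N, ∑ j, C i j ≤ lam) := by
  haveI : NeZero N := ⟨hN.ne'⟩
  haveI : Nonempty (Fin N) := ⟨⟨0, hN⟩⟩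
  set t := ∑ i, |C i i| with htdef
  have ht0 : 0 ≤ t := Finset.sum_nonneg fun i _ => abs_nonneg _
  set A := C + t • (1 : Matrix (Fin N) (Fin N) ℝ) with hAdef
  have hA : ∀ i j, 0 ≤ A i j := by
    intro i j
    by_cases h : i = j
    · subst h
      have h1 : |C i i| ≤ t :=
        Finset.single_le_sum (fun k _ => abs_nonneg (C k k)) (Finset.mem_univ i)
      have h2 : -C i i ≤ |C i i| := neg_le_abs _
      simp only [hAdef, Matrix.add_apply, Matrix.smul_apply, Matrix.one_apply_eq,
        smul_eq_mul, mul_one]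
      linarith
    · simp only [hAdef, Matrix.add_apply, Matrix.smul_apply, Matrix.one_apply_ne h,
        smul_eq_mul, mul_zero, add_zero]
      exact hC i j h
  obtain ⟨ρ, hρ0, hρmem, hρmax, i₀, hrow⟩ := pf_main hN A hA
  have hCA : C = A - t • (1 : Matrix (Fin N) (Fin N) ℝ) := by
    rw [hAdef]; abel
  refine ⟨ρ - t, ?_, ?_, ⟨i₀, ?_⟩⟩
  · -- real eigenvector for C
    have h1 : ¬ IsUnit (algebraMap ℂ (Matrix (Fin N) (Fin N) ℂ) (ρ : ℂ)
        - Complex.ofRealHom.mapMatrix A) := spectrum.mem_iff.mp hρmem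
    have h2 : algebraMap ℂ (Matrix (Fin N) (Fin N) ℂ) (ρ : ℂ) - Complex.ofRealHom.mapMatrix A
        = Complex.ofRealHom.mapMatrix ((ρ : ℝ) • 1 - A) := by
      ext i j
      by_cases h : i = j <;>
        simp [Matrix.algebraMap_matrix_apply, RingHom.mapMatrix_apply, Matrix.map_apply,
          Matrix.sub_apply, Matrix.smul_apply, Matrix.one_apply, h]
    rw [h2, Matrix.isUnit_iff_isUnit_det, isUnit_iff_ne_zero, not_not] at h1
    have h3 : (Complex.ofRealHom.mapMatrix ((ρ : ℝ) • 1 - A)).det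
        = Complex.ofRealHom (((ρ : ℝ) • 1 - A).det) :=
      (RingHom.map_det Complex.ofRealHom ((ρ : ℝ) • 1 - A)).symm
    rw [h3] at h1
    have hdet0 : (((ρ : ℝ) • (1 : Matrix (Fin N) (Fin N) ℝ) - A)).det = 0 := by
      rw [Complex.ofRealHom_eq_coe] at h1
      exact_mod_cast h1
    obtain ⟨x, hx0, hx⟩ := (Matrix.exists_mulVec_eq_zero_iff).mpr hdet0
    refine ⟨x, hx0, ?_⟩
    rw [Matrix.sub_mulVec, sub_eq_zero, Matrix.smul_mulVec, Matrix.one_mulVec] at hx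
    rw [hCA, Matrix.sub_mulVec, Matrix.smul_mulVec, Matrix.one_mulVec, ← hx, sub_smul]
  · -- domination of real parts
    rintro μ ⟨x, hx0, hx⟩
    have hmap : Complex.ofRealHom.mapMatrix A
        = C.map (Complex.ofReal ·) + (t : ℂ) • (1 : Matrix (Fin N) (Fin N) ℂ) := by
      ext i j
      by_cases h : i = j <;>
        simp [RingHom.mapMatrix_apply, Matrix.map_apply, hAdef, Matrix.add_apply,
          Matrix.smul_apply, Matrix.one_apply, h]
    have hAx : (Complex.ofRealHom.mapMatrix A).mulVec x = (μ + t) • x := by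
      rw [hmap, Matrix.add_mulVec, hx, Matrix.smul_mulVec, Matrix.one_mulVec, add_smul]
    have hmem : (μ + (t : ℂ)) ∈ spectrum ℂ (Complex.ofRealHom.mapMatrix A) :=
      (pf_mem_spectrum_iff _ _).mpr ⟨x, hx0, hAx⟩
    have h6 := hρmax _ hmem
    have hre : (μ + (t : ℂ)).re ≤ ‖μ + (t : ℂ)‖ := Complex.re_le_norm _
    have h7 : μ.re + t ≤ ρ := by
      have := le_trans hre h6
      simpa using this
    linarith
  · -- row sum bound
    have hsum : ∑ j, A i₀ j = (∑ j, C i₀ j) + t := by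
      rw [hAdef]
      simp [Matrix.add_apply, Matrix.smul_apply, Matrix.one_apply, Finset.sum_add_distrib,
        mul_ite, mul_one, mul_zero, Finset.sum_ite_eq]
    rw [hsum] at hrow
    linarith
end

section
/- Let u : [0,∞) → ℝ^N solve u' = C(t) u where each C(t) has positive off-diagonal entries, C is continuous, and u(0) ∈ ℝ^N_+ \ {0} (all coordinates nonnegative, u(0) ≠ 0). Then u(t) has all coordinates strictly positive for every t > 0. -/
open Matrix

open Filter Set Real Topology in
/-- Auxiliary: the solution stays nonnegative for `t ≥ 0`. -/
lemma stmt_8_nonneg {N : ℕ} (C : ℝ → Matrix (Fin N) (Fin N) ℝ)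
    (hCcont : Continuous C)
    (hC : ∀ t i j, i ≠ j → 0 < C t i j)
    (u : ℝ → Fin N → ℝ)
    (hu : ∀ t, HasDerivAt u ((C t).mulVec (u t)) t)
    (hu0 : ∀ i, 0 ≤ u 0 i) :
    ∀ t : ℝ, 0 ≤ t → ∀ i, 0 ≤ u t i := by
  intro t0 ht0 i0
  -- coordinatewise derivative
  have hucoord : ∀ t (i : Fin N),
      HasDerivAt (fun s => u s i) ((C t).mulVec (u t) i) t :=
    fun t i => hasDerivAt_pi.1 (hu t) i
  have hucont : ∀ i : Fin N, Continuous fun s => u s i := by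
    intro i
    have : Continuous u := by
      apply continuous_iff_continuousAt.2
      exact fun t => (hu t).continuousAt
    exact (continuous_apply i).comp this
  rcases eq_or_lt_of_le ht0 with h | h
  · rw [← h]; exact hu0 i0
  -- bound on row sums on [0, t0]
  set T := t0 with hT
  have hCij : ∀ i j : Fin N, Continuous fun s => C s i j := by
    intro i j
    exact (continuous_apply j).comp ((continuous_apply i).comp hCcont)
  have hrow : ∀ i : Fin N, Continuous fun s => ∑ j, C s i j := by
    intro i; exact continuous_finset_sum _ fun j _ => hCij i j
  obtain ⟨K, hK⟩ : ∃ K : ℝ, ∀ t ∈ Icc (0:ℝ) T, ∀ i : Fin N, ∑ j, C t i j < K := by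
    have hcont : Continuous fun s => ∑ i, ∑ j, |C s i j| :=
      continuous_finset_sum _ fun i _ =>
        continuous_finset_sum _ fun j _ => (hCij i j).abs
    obtain ⟨M, hM⟩ := (isCompact_Icc (a := (0:ℝ)) (b := T)).exists_bound_of_continuousOn
      hcont.continuousOn
    refine ⟨M + 1, fun t ht i => ?_⟩
    have h1 : ∑ j, C t i j ≤ ∑ i, ∑ j, |C t i j| := by
      calc ∑ j, C t i j ≤ ∑ j, |C t i j| :=
            Finset.sum_le_sum fun j _ => le_abs_self _
        _ ≤ ∑ i, ∑ j, |C t i j| := by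
            apply Finset.single_le_sum (f := fun i => ∑ j, |C t i j|)
              (fun k _ => Finset.sum_nonneg fun j _ => abs_nonneg _) (Finset.mem_univ i)
    have h2 := hM t ht
    rw [Real.norm_eq_abs, abs_of_nonneg
      (Finset.sum_nonneg fun i _ => Finset.sum_nonneg fun j _ => abs_nonneg _)] at h2
    linarith
  -- perturbed solution is positive
  have key : ∀ ε : ℝ, 0 < ε → ∀ t ∈ Icc (0:ℝ) T, ∀ i, 0 < u t i + ε * exp (K * t) := by
    intro ε hε
    set v : ℝ → Fin N → ℝ := fun t i => u t i + ε * exp (K * t) with hv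
    intro t ht i
    by_contra hneg
    push_neg at hneg
    set S : Set ℝ := {s | s ∈ Icc (0:ℝ) T ∧ ∃ i, v s i ≤ 0} with hS
    have hSne : S.Nonempty := ⟨t, ht, i, hneg⟩
    have hvcont : ∀ i : Fin N, Continuous fun s => v s i := by
      intro i
      exact (hucont i).add (continuous_const.mul ((continuous_const.mul continuous_id).rexp))
    have hSclosed : IsClosed S := by
      have : S = Icc (0:ℝ) T ∩ ⋃ i : Fin N, {s | v s i ≤ 0} := by
        ext s; simp [hS, Set.mem_iUnion]
      rw [this]
      exact isClosed_Icc.inter (isClosed_iUnion_of_finite fun i =>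
        isClosed_le (hvcont i) continuous_const)
    have hSbdd : BddBelow S := ⟨0, fun s hs => hs.1.1⟩
    set t1 := sInf S with ht1def
    have ht1S : t1 ∈ S := hSclosed.csInf_mem hSne hSbdd
    obtain ⟨⟨ht1nonneg, ht1T⟩, i1, hi1⟩ := ht1S
    have hv0 : ∀ i, 0 < v 0 i := fun i => by
      have := hu0 i
      simp only [hv, mul_zero, Real.exp_zero, mul_one]
      positivity
    have ht1pos : 0 < t1 := by
      rcases eq_or_lt_of_le ht1nonneg with h' | h'
      · exfalso; exact absurd hi1 (not_le.2 (h' ▸ hv0 i1))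
      · exact h'
    -- before t1 everything is positive
    have hbefore : ∀ s ∈ Ico (0:ℝ) t1, ∀ i, 0 < v s i := by
      intro s hs i
      by_contra hcon
      push_neg at hcon
      have : s ∈ S := ⟨⟨hs.1, le_trans hs.2.le ht1T⟩, i, hcon⟩
      exact absurd (csInf_le hSbdd this) (not_le.2 hs.2)
    -- at t1 everything is nonnegative
    have hat : ∀ i, 0 ≤ v t1 i := by
      intro i
      have htend : Tendsto (fun s => v s i) (𝓝[<] t1) (𝓝 (v t1 i)) :=
        ((hvcont i).tendsto t1).mono_left nhdsWithin_le_nhds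
      have hev : ∀ᶠ s in 𝓝[<] t1, 0 ≤ v s i := by
        filter_upwards [Ioo_mem_nhdsLT_of_mem (Set.mem_Ioc.2 ⟨ht1pos, le_refl t1⟩)]
          with s hs
        exact (hbefore s ⟨hs.1.le, hs.2⟩ i).le
      exact ge_of_tendsto htend hev
    have hvt1 : v t1 i1 = 0 := le_antisymm hi1 (hat i1)
    -- derivative of v at t1 in coordinate i1 is positive
    set D : ℝ := (C t1).mulVec (u t1) i1 + ε * (K * exp (K * t1)) with hD
    have h1 : HasDerivAt (fun s => Real.exp (K * s)) (K * Real.exp (K * t1)) t1 := by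
      have h2 := ((hasDerivAt_id t1).const_mul K).exp
      simp only [id] at h2
      convert h2 using 1
      ring
    have hder : HasDerivAt (fun s => v s i1) D t1 :=
      (hucoord t1 i1).add (h1.const_mul ε)
    have hDpos : 0 < D := by
      have hsum : (C t1).mulVec (u t1) i1
          = ∑ j, C t1 i1 j * v t1 j - ε * exp (K * t1) * ∑ j, C t1 i1 j := by
        simp only [Matrix.mulVec, dotProduct, hv]
        rw [Finset.mul_sum, ← Finset.sum_sub_distrib]
        congr 1; ext j; ring
      have hterm : 0 ≤ ∑ j, C t1 i1 j * v t1 j := by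
        apply Finset.sum_nonneg
        intro j _
        rcases eq_or_ne j i1 with rfl | hji
        · rw [hvt1, mul_zero]
        · exact mul_nonneg (hC t1 i1 j (Ne.symm hji)).le (hat j)
      have hKrow : ∑ j, C t1 i1 j < K := hK t1 ⟨ht1nonneg, ht1T⟩ i1
      have hexp : 0 < exp (K * t1) := Real.exp_pos _
      rw [hD, hsum]
      have : ε * exp (K * t1) * ∑ j, C t1 i1 j < ε * exp (K * t1) * K :=
        (mul_lt_mul_iff_right₀ (by positivity)).2 hKrow
      nlinarith
    -- but the slope from the left is nonpositive: contradiction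
    have hslope := hasDerivAt_iff_tendsto_slope.1 hder
    have hevpos : ∀ᶠ s in 𝓝[≠] t1, 0 < slope (fun s => v s i1) t1 s :=
      hslope (eventually_gt_nhds hDpos)
    have hleft : ∀ᶠ s in 𝓝[<] t1, 0 < slope (fun s => v s i1) t1 s :=
      hevpos.filter_mono (nhdsWithin_mono t1 fun s hs => ne_of_lt hs)
    have hmem : Ioo 0 t1 ∈ 𝓝[<] t1 :=
      Ioo_mem_nhdsLT_of_mem (Set.mem_Ioc.2 ⟨ht1pos, le_refl t1⟩)
    have hmem' : ∀ᶠ s in 𝓝[<] t1, s ∈ Ioo (0:ℝ) t1 := eventually_mem_set.2 hmem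
    obtain ⟨s, hs1, hs2⟩ := (hleft.and hmem').exists
    have hslt : s < t1 := hs2.2
    have hvspos : 0 < v s i1 := hbefore s ⟨hs2.1.le, hslt⟩ i1
    have : slope (fun s => v s i1) t1 s = v s i1 / (s - t1) := by
      rw [slope_def_field, hvt1]
      ring
    rw [this] at hs1
    have hden : s - t1 < 0 := by linarith
    rcases div_pos_iff.1 hs1 with ⟨_, h'⟩ | ⟨h', _⟩ <;> linarith
  -- pass to the limit ε → 0
  by_contra hcon
  push_neg at hcon
  set ε : ℝ := -u t0 i0 / (2 * exp (K * t0)) with hεdef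
  have hexp : 0 < exp (K * t0) := Real.exp_pos _
  have hε : 0 < ε := by
    apply div_pos (by linarith) (by positivity)
  have h2 := key ε hε t0 ⟨ht0, le_refl t0⟩ i0
  have : ε * exp (K * t0) = -u t0 i0 / 2 := by
    field_simp [hεdef]
    rw [hεdef]; field_simp
  rw [this] at h2
  linarith

open Filter Set Real Topology in
/-- If `u` solves `u' = C(t) u` with `C` continuous, each `C(t)` having positive
off-diagonal entries, and `u(0)` is nonnegative and nonzero, then all
coordinates of `u(t)` are strictly positive for every `t > 0`. -/
theorem stmt_8 {N : ℕ} (C : ℝ → Matrix (Fin N) (Fin N) ℝ)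
    (hCcont : Continuous C)
    (hC : ∀ t i j, i ≠ j → 0 < C t i j)
    (u : ℝ → Fin N → ℝ)
    (hu : ∀ t, HasDerivAt u ((C t).mulVec (u t)) t)
    (hu0 : ∀ i, 0 ≤ u 0 i) (hu0ne : u 0 ≠ 0) :
    ∀ t : ℝ, 0 < t → ∀ i, 0 < u t i := by
  have hnonneg := stmt_8_nonneg C hCcont hC u hu hu0
  have hucoord : ∀ t (i : Fin N),
      HasDerivAt (fun s => u s i) ((C t).mulVec (u t) i) t :=
    fun t i => hasDerivAt_pi.1 (hu t) i
  have hCij : ∀ i j : Fin N, Continuous fun s => C s i j := fun i j =>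
    (continuous_apply j).comp ((continuous_apply i).comp hCcont)
  -- integrating factor
  set F : Fin N → ℝ → ℝ := fun i t => ∫ s in (0:ℝ)..t, C s i i with hFdef
  have hF : ∀ (i : Fin N) (t : ℝ), HasDerivAt (F i) (C t i i) t := fun i t =>
    ((hCij i i).integral_hasStrictDerivAt 0 t).hasDerivAt
  set g : Fin N → ℝ → ℝ := fun i t => u t i * Real.exp (-(F i t)) with hgdef
  have hg : ∀ (i : Fin N) (t : ℝ), HasDerivAt (g i)
      (((C t).mulVec (u t) i - C t i i * u t i) * Real.exp (-(F i t))) t := by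
    intro i t
    have hexp : HasDerivAt (fun s => Real.exp (-(F i s)))
        (Real.exp (-(F i t)) * (-(C t i i))) t := ((hF i t).neg).exp
    have h2 : HasDerivAt (fun s => u s i * Real.exp (-(F i s))) _ t := (hucoord t i).mul hexp
    convert h2 using 1
    ring
  have hg0 : ∀ i : Fin N, g i 0 = u 0 i := by
    intro i
    simp [hgdef, hFdef, intervalIntegral.integral_same]
  -- the off-diagonal sum identity
  have hoff : ∀ (t : ℝ) (i : Fin N),
      (C t).mulVec (u t) i - C t i i * u t i
        = ∑ j ∈ Finset.univ.erase i, C t i j * u t j := by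
    intro t i
    rw [Matrix.mulVec, dotProduct]
    rw [← Finset.add_sum_erase _ _ (Finset.mem_univ i)]
    ring
  -- some coordinate is positive at 0
  obtain ⟨j0, hj0⟩ : ∃ j, 0 < u 0 j := by
    rcases Function.ne_iff.1 hu0ne with ⟨j, hj⟩
    exact ⟨j, lt_of_le_of_ne (hu0 j) (Ne.symm hj)⟩
  -- g continuous
  have hgcont : ∀ i : Fin N, Continuous (g i) :=
    fun i => continuous_iff_continuousAt.2 fun t => (hg i t).continuousAt
  -- coordinate j0 stays positive for t ≥ 0
  have hj0pos : ∀ t : ℝ, 0 ≤ t → 0 < u t j0 := by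
    intro t ht
    rcases eq_or_lt_of_le ht with rfl | ht
    · exact hj0
    have hmono : MonotoneOn (g j0) (Icc 0 t) := by
      apply monotoneOn_of_deriv_nonneg (convex_Icc 0 t) (hgcont j0).continuousOn
      · intro x _; exact (hg j0 x).differentiableAt.differentiableWithinAt
      · intro x hx
        rw [interior_Icc] at hx
        rw [(hg j0 x).deriv, hoff]
        apply mul_nonneg _ (Real.exp_pos _).le
        apply Finset.sum_nonneg
        intro j hj
        exact mul_nonneg (hC x j0 j (Finset.ne_of_mem_erase hj).symm).le
          (hnonneg x hx.1.le j)
    have h1 : g j0 0 ≤ g j0 t :=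
      hmono (Set.left_mem_Icc.2 ht.le) (Set.right_mem_Icc.2 ht.le) ht.le
    rw [hg0] at h1
    have h2 : 0 < g j0 t := lt_of_lt_of_le hj0 h1
    have hep := Real.exp_pos (-(F j0 t))
    by_contra hcon
    push_neg at hcon
    have h3 : g j0 t = u t j0 * Real.exp (-(F j0 t)) := rfl
    nlinarith [h2, h3]
  -- now all coordinates are positive for t > 0
  intro t ht i
  rcases eq_or_ne i j0 with rfl | hij
  · exact hj0pos t ht.le
  have hsmono : StrictMonoOn (g i) (Icc 0 t) := by
    apply strictMonoOn_of_deriv_pos (convex_Icc 0 t) (hgcont i).continuousOn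
    intro x hx
    rw [interior_Icc] at hx
    rw [(hg i x).deriv, hoff]
    apply mul_pos _ (Real.exp_pos _)
    have hj0mem : j0 ∈ Finset.univ.erase i := Finset.mem_erase.2 ⟨fun h => hij h.symm, Finset.mem_univ _⟩
    apply Finset.sum_pos' _ ⟨j0, hj0mem, mul_pos (hC x i j0 hij) (hj0pos x hx.1.le)⟩
    intro j hj
    exact mul_nonneg (hC x i j (Finset.ne_of_mem_erase hj).symm).le
      (hnonneg x hx.1.le j)
  have h1 : g i 0 < g i t :=
    hsmono (Set.left_mem_Icc.2 ht.le) (Set.right_mem_Icc.2 ht.le) ht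
  rw [hg0] at h1
  have h2 : 0 < g i t := lt_of_le_of_lt (hu0 i) h1
  have hep := Real.exp_pos (-(F i t))
  by_contra hcon
  push_neg at hcon
  have h3 : g i t = u t i * Real.exp (-(F i t)) := rfl
  nlinarith [h2, h3]
end

section
/- Let w : ℝ → (0,∞)^N be a differentiable T-periodic function with all coordinates positive, solving w' = C(t) w − κ(t) w, where C : ℝ → ℝ^{N×N} is continuous T-periodic with positive, time-independent off-diagonal entries c_{ij}, and κ : ℝ → ℝ is continuous T-periodic. Define ŵ_i := exp((1/T)∫_0^T ln w_i(t) dt), c̄_{ii} := (1/T)∫_0^T C(t) i i dt, Λ := (1/T)∫_0^T κ(t) dt, and let C̄ be the matrix with entries c̄_{ii} on the diagonal and c_{ij} off the diagonal. Then (C̄ ŵ) i ≤ Λ · ŵ_i for every i. -/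
open Matrix

/-- Key averaging inequality: if `w` is a positive `T`-periodic solution of
`w' = C(t) w − κ(t) w`, where the off-diagonal entries of `C` are
time-independent and positive, then `(C̄ ŵ) i ≤ Λ ŵ i` for every `i`, where
`ŵ_i = exp((1/T)∫₀ᵀ ln w_i)`, `Λ = (1/T)∫₀ᵀ κ`, and `C̄` has the time-averaged
diagonal entries and the (constant) off-diagonal entries of `C`. -/
theorem stmt_13 {N : ℕ} (hN : 2 ≤ N) (T : ℝ) (hT : 0 < T)
    (C : ℝ → Matrix (Fin N) (Fin N) ℝ) (κ : ℝ → ℝ)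
    (hCcont : Continuous C) (hCper : ∀ t, C (t + T) = C t)
    (hκcont : Continuous κ) (hκper : ∀ t, κ (t + T) = κ t)
    (hCoffconst : ∀ i j, i ≠ j → ∀ s t : ℝ, C s i j = C t i j)
    (hCoffpos : ∀ t i j, i ≠ j → 0 < C t i j)
    (w : ℝ → Fin N → ℝ)
    (hw : ∀ t, HasDerivAt w ((C t).mulVec (w t) - κ t • w t) t)
    (hwpos : ∀ t i, 0 < w t i)
    (hwper : ∀ t, w (t + T) = w t) :
    ∀ i,
      (Matrix.of fun i' j' => if i' = j' then (1 / T) * ∫ t in (0 : ℝ)..T, C t i' i'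
          else C 0 i' j').mulVec
        (fun j => Real.exp ((1 / T) * ∫ t in (0 : ℝ)..T, Real.log (w t j))) i ≤
      ((1 / T) * ∫ t in (0 : ℝ)..T, κ t) *
        Real.exp ((1 / T) * ∫ t in (0 : ℝ)..T, Real.log (w t i)) := by
  have hwc : Continuous w := by
    rw [continuous_iff_continuousAt]; exact fun t => (hw t).continuousAt
  have hwic : ∀ i, Continuous fun t => w t i := fun i => (continuous_apply i).comp hwc
  have hCijc : ∀ i j, Continuous fun t => C t i j := fun i j =>
    (continuous_apply j).comp ((continuous_apply i).comp hCcont)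
  intro i
  set m : Fin N → ℝ := fun j => (1 / T) * ∫ t in (0 : ℝ)..T, Real.log (w t j) with hm
  have hmint : ∀ j, (∫ t in (0 : ℝ)..T, Real.log (w t j)) = T * m j := by
    intro j
    rw [hm]; field_simp
  -- the function whose integral over a period vanishes
  set g : ℝ → ℝ := fun t =>
    C t i i - κ t + ∑ j ∈ Finset.univ.erase i, C 0 i j * (w t j / w t i) with hg
  have hgderiv : ∀ t, HasDerivAt (fun s => Real.log (w s i)) (g t) t := by
    intro t
    have h1 : HasDerivAt (fun s => w s i) (((C t).mulVec (w t) - κ t • w t) i) t :=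
      hasDerivAt_pi.mp (hw t) i
    have h2 := h1.log (hwpos t i).ne'
    convert h2 using 1
    have hne : w t i ≠ 0 := (hwpos t i).ne'
    have hsum : (∑ j, C t i j * w t j) = C t i i * w t i +
        ∑ j ∈ Finset.univ.erase i, C t i j * w t j :=
      (Finset.add_sum_erase _ _ (Finset.mem_univ i)).symm
    have hoff : ∀ j ∈ Finset.univ.erase i, C 0 i j * (w t j / w t i)
        = C t i j * w t j / w t i := by
      intro j hj
      rw [hCoffconst i j (Finset.ne_of_mem_erase hj).symm 0 t, mul_div_assoc]
    simp only [hg, Pi.sub_apply, Pi.smul_apply, smul_eq_mul, Matrix.mulVec,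
      dotProduct, Finset.sum_congr rfl hoff]
    rw [hsum]
    field_simp
    rw [mul_add, Finset.mul_sum, Finset.sum_congr rfl (fun x _ => by field_simp :
      ∀ x ∈ Finset.univ.erase i, w t i * (C t i x * w t x / w t i) = C t i x * w t x)]
    ring
  have hgcont : Continuous g := by
    refine ((hCijc i i).sub hκcont).add (continuous_finset_sum _ fun j _ => ?_)
    exact continuous_const.mul ((hwic j).div (hwic i) fun t => (hwpos t i).ne')
  have hgint0 : (∫ t in (0 : ℝ)..T, g t) = 0 := by
    rw [intervalIntegral.integral_eq_sub_of_hasDerivAt (fun t _ => hgderiv t)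
      (hgcont.intervalIntegrable _ _)]
    have hwT : w T = w 0 := by simpa using hwper 0
    rw [hwT, sub_self]
  -- split the integral
  have hint1 : IntervalIntegrable (fun t => C t i i - κ t) MeasureTheory.volume 0 T :=
    ((hCijc i i).sub hκcont).intervalIntegrable _ _
  have hcont2 : ∀ j : Fin N, Continuous fun t => w t j / w t i := fun j =>
    (hwic j).div (hwic i) fun t => (hwpos t i).ne'
  have hsplit : (∫ t in (0 : ℝ)..T, g t)
      = ((∫ t in (0 : ℝ)..T, C t i i) - ∫ t in (0 : ℝ)..T, κ t)
        + ∑ j ∈ Finset.univ.erase i, C 0 i j * ∫ t in (0 : ℝ)..T, w t j / w t i := by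
    rw [hg]
    rw [intervalIntegral.integral_add hint1 (Continuous.intervalIntegrable
      (continuous_finset_sum _ fun j _ => continuous_const.mul (hcont2 j) :
        Continuous fun t => ∑ j ∈ Finset.univ.erase i, C 0 i j * (w t j / w t i)) _ _)]
    rw [intervalIntegral.integral_sub ((hCijc i i).intervalIntegrable _ _)
      (hκcont.intervalIntegrable _ _)]
    rw [intervalIntegral.integral_finset_sum (f := fun j t => C 0 i j * (w t j / w t i))
      (fun j _ => (continuous_const.mul (hcont2 j) :
        Continuous fun t => C 0 i j * (w t j / w t i)).intervalIntegrable _ _)]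
    congr 1
    exact Finset.sum_congr rfl fun j _ => intervalIntegral.integral_const_mul _ _
  -- Jensen-type lower bound for each off-diagonal integral
  have hjensen : ∀ j : Fin N, T * Real.exp (m j - m i) ≤ ∫ t in (0 : ℝ)..T, w t j / w t i := by
    intro j
    set μ := m j - m i with hμ
    have hlogc : ∀ k : Fin N, Continuous fun t => Real.log (w t k) := fun k =>
      (hwic k).log fun t => (hwpos t k).ne'
    have hmono : ∀ t ∈ Set.Icc (0 : ℝ) T,
        Real.exp μ * ((Real.log (w t j) - Real.log (w t i)) - μ + 1) ≤ w t j / w t i := by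
      intro t _
      have h1 : w t j / w t i = Real.exp (Real.log (w t j) - Real.log (w t i)) := by
        rw [Real.exp_sub, Real.exp_log (hwpos t j), Real.exp_log (hwpos t i)]
      rw [h1]
      set x := Real.log (w t j) - Real.log (w t i)
      have h2 : (x - μ) + 1 ≤ Real.exp (x - μ) := Real.add_one_le_exp _
      calc Real.exp μ * (x - μ + 1) ≤ Real.exp μ * Real.exp (x - μ) := by
            exact mul_le_mul_of_nonneg_left h2 (Real.exp_pos μ).le
        _ = Real.exp x := by rw [← Real.exp_add]; ring_nf
    have hintle := intervalIntegral.integral_mono_on (μ := MeasureTheory.volume)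
      (f := fun t => Real.exp μ * ((Real.log (w t j) - Real.log (w t i)) - μ + 1)) hT.le
      (Continuous.intervalIntegrable
        (continuous_const.mul ((((hlogc j).sub (hlogc i)).sub continuous_const).add
          continuous_const) : Continuous fun t =>
            Real.exp μ * ((Real.log (w t j) - Real.log (w t i)) - μ + 1)) _ _)
      ((hcont2 j).intervalIntegrable _ _) hmono
    refine le_trans (le_of_eq ?_) hintle
    rw [intervalIntegral.integral_const_mul]
    rw [intervalIntegral.integral_add
      (f := fun t => (Real.log (w t j) - Real.log (w t i)) - μ)
      ((((hlogc j).sub (hlogc i)).sub continuous_const : Continuous fun t =>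
        (Real.log (w t j) - Real.log (w t i)) - μ).intervalIntegrable _ _)
      (continuous_const.intervalIntegrable _ _)]
    rw [intervalIntegral.integral_sub
      (f := fun t => Real.log (w t j) - Real.log (w t i))
      (((hlogc j).sub (hlogc i) : Continuous fun t =>
        Real.log (w t j) - Real.log (w t i)).intervalIntegrable _ _)
      (continuous_const.intervalIntegrable _ _)]
    rw [intervalIntegral.integral_sub ((hlogc j).intervalIntegrable _ _)
      ((hlogc i).intervalIntegrable _ _)]
    rw [hmint j, hmint i, intervalIntegral.integral_const, intervalIntegral.integral_const]
    simp only [smul_eq_mul, sub_zero, mul_one, hμ]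
    ring
  -- put everything together
  have hE : ((∫ t in (0 : ℝ)..T, C t i i) - ∫ t in (0 : ℝ)..T, κ t)
      + ∑ j ∈ Finset.univ.erase i, C 0 i j * ∫ t in (0 : ℝ)..T, w t j / w t i = 0 := by
    rw [← hsplit, hgint0]
  set A := ∫ t in (0 : ℝ)..T, C t i i with hA
  set K := ∫ t in (0 : ℝ)..T, κ t with hK
  set S := ∑ j ∈ Finset.univ.erase i, C 0 i j * ∫ t in (0 : ℝ)..T, w t j / w t i with hS
  -- rewrite goal
  have hgoal : (Matrix.of fun i' j' => if i' = j' then (1 / T) * ∫ t in (0 : ℝ)..T, C t i' i'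
          else C 0 i' j').mulVec
        (fun j => Real.exp ((1 / T) * ∫ t in (0 : ℝ)..T, Real.log (w t j))) i
      = (1 / T) * A * Real.exp (m i)
        + ∑ j ∈ Finset.univ.erase i, C 0 i j * Real.exp (m j) := by
    simp only [Matrix.mulVec, dotProduct, Matrix.of_apply]
    rw [← Finset.add_sum_erase _ _ (Finset.mem_univ i)]
    simp only [if_pos rfl, hm, hA]
    congr 1
    refine Finset.sum_congr rfl fun j hj => ?_
    rw [if_neg (Finset.ne_of_mem_erase hj).symm]
  rw [hgoal]
  show _ ≤ (1 / T) * K * Real.exp (m i)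
  have hsumle : ∑ j ∈ Finset.univ.erase i, C 0 i j * Real.exp (m j)
      ≤ (S / T) * Real.exp (m i) := by
    rw [hS, Finset.sum_div, Finset.sum_mul]
    refine Finset.sum_le_sum fun j hj => ?_
    have hc : 0 < C 0 i j := hCoffpos 0 i j (Finset.ne_of_mem_erase hj).symm
    have h1 : Real.exp (m j) ≤ (∫ t in (0 : ℝ)..T, w t j / w t i) / T * Real.exp (m i) := by
      have h2 := hjensen j
      have h3 : Real.exp (m j - m i) ≤ (∫ t in (0 : ℝ)..T, w t j / w t i) / T := by
        rw [le_div_iff₀ hT]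
        linarith [h2]
      calc Real.exp (m j) = Real.exp (m j - m i) * Real.exp (m i) := by
            rw [← Real.exp_add]; ring_nf
        _ ≤ (∫ t in (0 : ℝ)..T, w t j / w t i) / T * Real.exp (m i) :=
            mul_le_mul_of_nonneg_right h3 (Real.exp_pos _).le
    calc C 0 i j * Real.exp (m j)
        ≤ C 0 i j * ((∫ t in (0 : ℝ)..T, w t j / w t i) / T * Real.exp (m i)) :=
          mul_le_mul_of_nonneg_left h1 hc.le
      _ = C 0 i j * (∫ t in (0 : ℝ)..T, w t j / w t i) / T * Real.exp (m i) := by ring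
  have hKAS : K = A + S := by linarith [hE]
  have hEi : (0 : ℝ) < Real.exp (m i) := Real.exp_pos _
  calc (1 / T) * A * Real.exp (m i) + ∑ j ∈ Finset.univ.erase i, C 0 i j * Real.exp (m j)
      ≤ (1 / T) * A * Real.exp (m i) + (S / T) * Real.exp (m i) := by linarith [hsumle]
    _ = (1 / T) * (A + S) * Real.exp (m i) := by ring
    _ = (1 / T) * K * Real.exp (m i) := by rw [hKAS]
end

section
/- (Averaging theorem, ODE version) Let C : ℝ → ℝ^{N×N} be continuous and T-periodic with off-diagonal entries positive and independent of time. Suppose v : ℝ → ℝ^N is a solution of v' = C(t) v with all coordinates positive for all t and v(T) = e^{ΛT} v(0) for some real Λ. Let C̄ be the matrix whose off-diagonal entries agree with those of C and whose diagonal entries are c̄_{ii} = (1/T)∫_0^T C(t) i i dt. Then Λ ≥ λ_dom(C̄), the largest real eigenvalue of C̄. -/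
open Matrix

/-- Averaging theorem (ODE version): if `C` is continuous `T`-periodic with
positive, time-independent off-diagonal entries, and `v` is a globally positive
Floquet solution of `v' = C(t) v` with `v(T) = e^{ΛT} v(0)`, then
`Λ ≥ λ_dom(C̄)`, where `C̄` has the time-averaged diagonal entries and the
constant off-diagonal entries of `C`, and `λ_dom(C̄)` is its largest real
eigenvalue. -/
theorem stmt_14 {N : ℕ} (T : ℝ) (hT : 0 < T)
    (C : ℝ → Matrix (Fin N) (Fin N) ℝ)
    (hCcont : Continuous C) (hCper : ∀ t, C (t + T) = C t)
    (hCoffconst : ∀ i j, i ≠ j → ∀ s t : ℝ, C s i j = C t i j)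
    (hCoffpos : ∀ t i j, i ≠ j → 0 < C t i j)
    (v : ℝ → Fin N → ℝ) (Λ : ℝ)
    (hv : ∀ t, HasDerivAt v ((C t).mulVec (v t)) t)
    (hvpos : ∀ t i, 0 < v t i)
    (hFloquet : v T = Real.exp (Λ * T) • v 0)
    (Cbar : Matrix (Fin N) (Fin N) ℝ)
    (hCbar : ∀ i j, Cbar i j =
      if i = j then (1 / T) * ∫ t in (0 : ℝ)..T, C t i i else C 0 i j)
    (lam : ℝ)
    (hlam : IsGreatest {μ : ℝ | ∃ x : Fin N → ℝ, x ≠ 0 ∧ Cbar.mulVec x = μ • x} lam) :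
    lam ≤ Λ := by
  classical
  obtain ⟨x, hx0, hxeig⟩ := hlam.1
  rcases Nat.eq_zero_or_pos N with hN | hN
  · subst hN
    exact absurd (funext fun i => i.elim0) hx0
  haveI : Nonempty (Fin N) := ⟨⟨0, hN⟩⟩
  -- continuity of coordinates of v
  have hvcont : Continuous v := by
    refine continuous_iff_continuousAt.mpr fun t => (hv t).continuousAt
  have hvconti : ∀ i, Continuous fun t => v t i :=
    fun i => (continuous_apply i).comp hvcont
  have hCcontij : ∀ i j, Continuous fun t => C t i j :=
    fun i j => (continuous_apply j).comp ((continuous_apply i).comp hCcont)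
  have hvd : ∀ t i, HasDerivAt (fun s => v s i) ((C t).mulVec (v t) i) t :=
    fun t i => (hasDerivAt_pi.mp (hv t)) i
  have hmvcont : ∀ i, Continuous fun t => (C t).mulVec (v t) i := by
    intro i
    simp only [Matrix.mulVec, dotProduct]
    exact continuous_finset_sum _ fun j _ => (hCcontij i j).mul (hvconti j)
  have hgcont : ∀ i, Continuous fun t => (C t).mulVec (v t) i / v t i :=
    fun i => (hmvcont i).div (hvconti i) fun t => (hvpos t i).ne'
  -- FTC
  have key1 : ∀ i, (∫ t in (0:ℝ)..T, (C t).mulVec (v t) i / v t i) = Λ * T := by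
    intro i
    have h1 : (∫ t in (0:ℝ)..T, (C t).mulVec (v t) i / v t i)
        = Real.log (v T i) - Real.log (v 0 i) := by
      refine intervalIntegral.integral_eq_sub_of_hasDerivAt
        (fun t _ => (hvd t i).log (hvpos t i).ne') ((hgcont i).intervalIntegrable _ _)
    have h2 : v T i = Real.exp (Λ * T) * v 0 i := by
      rw [hFloquet]; simp
    rw [h1, h2, Real.log_mul (Real.exp_ne_zero _) (hvpos 0 i).ne', Real.log_exp]
    ring
  -- decomposition of the integrand
  have hdecomp : ∀ i t, (C t).mulVec (v t) i / v t i
      = C t i i + ∑ j ∈ Finset.univ.erase i, C 0 i j * (v t j / v t i) := by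
    intro i t
    have hvi := (hvpos t i).ne'
    have h1 : (C t).mulVec (v t) i
        = C t i i * v t i + ∑ j ∈ Finset.univ.erase i, C t i j * v t j := by
      simp only [Matrix.mulVec, dotProduct]
      exact (Finset.add_sum_erase _ _ (Finset.mem_univ i)).symm
    rw [h1, add_div, mul_div_assoc, div_self hvi, mul_one, Finset.sum_div]
    congr 1
    refine Finset.sum_congr rfl fun j hj => ?_
    rw [mul_div_assoc, hCoffconst i j (Finset.ne_of_mem_erase hj).symm t 0]
  -- the averaged log values
  set y : Fin N → ℝ := fun i => (∫ t in (0:ℝ)..T, Real.log (v t i)) / T with hy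
  set z : Fin N → ℝ := fun i => Real.exp (y i) with hz
  have hzpos : ∀ i, 0 < z i := fun i => Real.exp_pos _
  have hlogcont : ∀ i, Continuous fun t => Real.log (v t i) :=
    fun i => (hvconti i).log fun t => (hvpos t i).ne'
  -- Jensen-type lower bound for the ratio integrals
  have hD : ∀ i j, T * (z j / z i) ≤ ∫ t in (0:ℝ)..T, v t j / v t i := by
    intro i j
    set w : ℝ → ℝ := fun t => Real.log (v t j) - Real.log (v t i) with hw
    have hwcont : Continuous w := (hlogcont j).sub (hlogcont i)
    set m : ℝ := (∫ t in (0:ℝ)..T, w t) / T with hm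
    have hexp : ∀ t, v t j / v t i = Real.exp (w t) := by
      intro t
      rw [hw, Real.exp_sub, Real.exp_log (hvpos t j), Real.exp_log (hvpos t i)]
    have hpt : ∀ t, Real.exp m * (w t - m + 1) ≤ v t j / v t i := by
      intro t
      rw [hexp t]
      calc Real.exp m * (w t - m + 1) ≤ Real.exp m * Real.exp (w t - m) :=
            mul_le_mul_of_nonneg_left (Real.add_one_le_exp _) (Real.exp_pos m).le
        _ = Real.exp (w t) := by rw [← Real.exp_add]; congr 1; ring
    have hInt1 : IntervalIntegrable (fun t => Real.exp m * (w t - m + 1)) MeasureTheory.volume 0 T :=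
      (Continuous.intervalIntegrable (by continuity) _ _)
    have hInt2 : IntervalIntegrable (fun t => v t j / v t i) MeasureTheory.volume 0 T :=
      (((hvconti j).div (hvconti i) fun t => (hvpos t i).ne').intervalIntegrable _ _)
    have hmono := intervalIntegral.integral_mono_on hT.le hInt1 hInt2
      (fun t _ => hpt t)
    have hwint : (∫ t in (0:ℝ)..T, w t) = m * T := by
      rw [hm]; field_simp
    have hlhs : (∫ t in (0:ℝ)..T, Real.exp m * (w t - m + 1)) = Real.exp m * T := by
      rw [intervalIntegral.integral_const_mul]
      have : (∫ t in (0:ℝ)..T, (w t - m + 1))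
          = (∫ t in (0:ℝ)..T, w t) + (1 - m) * (T - 0) := by
        have h1 : IntervalIntegrable w MeasureTheory.volume 0 T :=
          hwcont.intervalIntegrable _ _
        have h2 : (∫ t in (0:ℝ)..T, (w t - m + 1))
            = ∫ t in (0:ℝ)..T, (w t + (1 - m)) := by
          congr 1; funext t; ring
        rw [h2, intervalIntegral.integral_add h1 intervalIntegrable_const,
          intervalIntegral.integral_const, smul_eq_mul]
        ring
      rw [this, hwint]; ring
    have hmeq : m = y j - y i := by
      rw [hm, hy]
      have : (∫ t in (0:ℝ)..T, w t)
          = (∫ t in (0:ℝ)..T, Real.log (v t j)) - ∫ t in (0:ℝ)..T, Real.log (v t i) :=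
        intervalIntegral.integral_sub ((hlogcont j).intervalIntegrable _ _)
          ((hlogcont i).intervalIntegrable _ _)
      rw [this]; ring
    have hzz : z j / z i = Real.exp m := by
      rw [hz, hmeq, ← Real.exp_sub]
    rw [hzz]
    calc T * Real.exp m = Real.exp m * T := by ring
      _ = ∫ t in (0:ℝ)..T, Real.exp m * (w t - m + 1) := hlhs.symm
      _ ≤ _ := hmono
  -- main inequality: Cbar z ≤ Λ z componentwise
  have hE : ∀ i, Cbar.mulVec z i ≤ Λ * z i := by
    intro i
    have hsplit : (∫ t in (0:ℝ)..T, (C t).mulVec (v t) i / v t i)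
        = (∫ t in (0:ℝ)..T, C t i i)
          + ∑ j ∈ Finset.univ.erase i, C 0 i j * ∫ t in (0:ℝ)..T, v t j / v t i := by
      have h1 : (∫ t in (0:ℝ)..T, (C t).mulVec (v t) i / v t i)
          = ∫ t in (0:ℝ)..T,
              (C t i i + ∑ j ∈ Finset.univ.erase i, C 0 i j * (v t j / v t i)) := by
        congr 1; funext t; exact hdecomp i t
      have hIntratio : ∀ j : Fin N, IntervalIntegrable (fun t => C 0 i j * (v t j / v t i))
          MeasureTheory.volume 0 T := fun j =>
        (Continuous.intervalIntegrable
          (continuous_const.mul ((hvconti j).div (hvconti i) fun t => (hvpos t i).ne')) _ _)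
      have hIntsum : IntervalIntegrable
          (fun t => ∑ j ∈ Finset.univ.erase i, C 0 i j * (v t j / v t i))
          MeasureTheory.volume 0 T :=
        Continuous.intervalIntegrable (continuous_finset_sum _ fun j _ =>
          continuous_const.mul ((hvconti j).div (hvconti i) fun t => (hvpos t i).ne')) _ _
      rw [h1, intervalIntegral.integral_add ((hCcontij i i).intervalIntegrable _ _) hIntsum,
        intervalIntegral.integral_finset_sum fun j _ => hIntratio j]
      congr 1
      exact Finset.sum_congr rfl fun j _ => intervalIntegral.integral_const_mul _ _
    have h1 : (∫ t in (0:ℝ)..T, C t i i)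
          + ∑ j ∈ Finset.univ.erase i, C 0 i j * (T * (z j / z i)) ≤ Λ * T := by
      rw [← key1 i, hsplit]
      gcongr with j hj
      · exact (hCoffpos 0 i j (Finset.ne_of_mem_erase hj).symm).le
      · exact hD i j
    have hmul := mul_le_mul_of_nonneg_right h1 (div_pos (hzpos i) hT).le
    have hrw : ((∫ t in (0:ℝ)..T, C t i i)
          + ∑ j ∈ Finset.univ.erase i, C 0 i j * (T * (z j / z i))) * (z i / T)
        = Cbar i i * z i + ∑ j ∈ Finset.univ.erase i, C 0 i j * z j := by
      rw [add_mul, Finset.sum_mul, hCbar i i, if_pos rfl]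
      congr 1
      · ring
      · refine Finset.sum_congr rfl fun j _ => ?_
        have hzi := (hzpos i).ne'
        have hT' := hT.ne'
        field_simp
    have hmv : Cbar.mulVec z i
        = Cbar i i * z i + ∑ j ∈ Finset.univ.erase i, Cbar i j * z j := by
      simp only [Matrix.mulVec, dotProduct]
      exact (Finset.add_sum_erase _ _ (Finset.mem_univ i)).symm
    have hmv2 : Cbar.mulVec z i
        = Cbar i i * z i + ∑ j ∈ Finset.univ.erase i, C 0 i j * z j := by
      rw [hmv]
      congr 1
      refine Finset.sum_congr rfl fun j hj => ?_
      rw [hCbar i j, if_neg (Finset.ne_of_mem_erase hj).symm]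
    have hfin : Λ * T * (z i / T) = Λ * z i := by field_simp
    rw [hrw, hfin] at hmul
    rw [hmv2]
    exact hmul
  -- Perron comparison step
  set c : ℝ := |lam| + ∑ k, |Cbar k k| with hc
  have hsumabs : ∀ i : Fin N, |Cbar i i| ≤ ∑ k, |Cbar k k| := fun i =>
    Finset.single_le_sum (f := fun k => |Cbar k k|) (fun k _ => abs_nonneg _) (Finset.mem_univ i)
  have hc1 : 0 ≤ lam + c := by
    have := neg_abs_le lam
    have h0 : (0:ℝ) ≤ ∑ k, |Cbar k k| := Finset.sum_nonneg fun k _ => abs_nonneg _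
    simp only [hc]; linarith
  have hA : ∀ i j, 0 ≤ Cbar i j + (if i = j then c else 0) := by
    intro i j
    by_cases hij : i = j
    · subst hij
      rw [if_pos rfl]
      have h1 := hsumabs i
      have h2 := neg_abs_le (Cbar i i)
      have h3 := abs_nonneg lam
      simp only [hc]; linarith
    · rw [if_neg hij, add_zero, hCbar i j, if_neg hij]
      exact (hCoffpos 0 i j hij).le
  obtain ⟨i0, _, hmax⟩ := Finset.exists_max_image Finset.univ
    (fun i => |x i| / z i) ⟨Classical.arbitrary _, Finset.mem_univ _⟩
  set s : ℝ := |x i0| / z i0 with hs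
  have hsle : ∀ j, |x j| ≤ s * z j := by
    intro j
    have := hmax j (Finset.mem_univ j)
    exact (div_le_iff₀ (hzpos j)).mp this
  have hs0 : 0 < s := by
    obtain ⟨j, hj⟩ := Function.ne_iff.mp hx0
    have h1 : 0 < |x j| / z j := div_pos (abs_pos.mpr hj) (hzpos j)
    exact lt_of_lt_of_le h1 (hmax j (Finset.mem_univ j))
  have hxi0 : |x i0| = s * z i0 := by
    rw [hs, div_mul_cancel₀ _ (hzpos i0).ne']
  have heig : Cbar.mulVec x i0 = lam * x i0 := by
    rw [hxeig]; simp
  have hchain : (lam + c) * |x i0| ≤ (Λ + c) * |x i0| := by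
    calc (lam + c) * |x i0| = |(lam + c) * x i0| := by
          rw [abs_mul, abs_of_nonneg hc1]
      _ = |∑ j, (Cbar i0 j + if i0 = j then c else 0) * x j| := by
          congr 1
          have : ∑ j, (Cbar i0 j + if i0 = j then c else 0) * x j
              = (∑ j, Cbar i0 j * x j) + ∑ j, (if i0 = j then c * x j else 0) := by
            rw [← Finset.sum_add_distrib]
            refine Finset.sum_congr rfl fun j _ => ?_
            by_cases h : i0 = j <;> simp [h] <;> ring
          rw [this, Finset.sum_ite_eq Finset.univ i0, if_pos (Finset.mem_univ i0)]
          have : (∑ j, Cbar i0 j * x j) = Cbar.mulVec x i0 := by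
            simp [Matrix.mulVec, dotProduct]
          rw [this, heig]; ring
      _ ≤ ∑ j, |(Cbar i0 j + if i0 = j then c else 0) * x j| :=
          Finset.abs_sum_le_sum_abs _ _
      _ = ∑ j, (Cbar i0 j + if i0 = j then c else 0) * |x j| := by
          refine Finset.sum_congr rfl fun j _ => ?_
          rw [abs_mul, abs_of_nonneg (hA i0 j)]
      _ ≤ ∑ j, (Cbar i0 j + if i0 = j then c else 0) * (s * z j) := by
          refine Finset.sum_le_sum fun j _ => ?_
          exact mul_le_mul_of_nonneg_left (hsle j) (hA i0 j)
      _ = s * (Cbar.mulVec z i0 + c * z i0) := by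
          have : ∑ j, (Cbar i0 j + if i0 = j then c else 0) * (s * z j)
              = (∑ j, Cbar i0 j * (s * z j)) + ∑ j, (if i0 = j then c * (s * z j) else 0) := by
            rw [← Finset.sum_add_distrib]
            refine Finset.sum_congr rfl fun j _ => ?_
            by_cases h : i0 = j <;> simp [h] <;> ring
          rw [this, Finset.sum_ite_eq Finset.univ i0, if_pos (Finset.mem_univ i0)]
          have h2 : (∑ j, Cbar i0 j * (s * z j)) = s * Cbar.mulVec z i0 := by
            simp only [Matrix.mulVec, dotProduct, Finset.mul_sum]
            exact Finset.sum_congr rfl fun j _ => by ring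
          rw [h2]; ring
      _ ≤ s * (Λ * z i0 + c * z i0) := by
          refine mul_le_mul_of_nonneg_left ?_ hs0.le
          linarith [hE i0]
      _ = (Λ + c) * |x i0| := by rw [hxi0]; ring
  have hxi0pos : 0 < |x i0| := by
    rw [hxi0]; exact mul_pos hs0 (hzpos i0)
  have hchain' : |x i0| * (lam + c) ≤ |x i0| * (Λ + c) := by
    calc |x i0| * (lam + c) = (lam + c) * |x i0| := by ring
      _ ≤ (Λ + c) * |x i0| := hchain
      _ = |x i0| * (Λ + c) := by ring
  have := le_of_mul_le_mul_left hchain' hxi0pos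
  linarith
end

section
/- Let C be a real N×N matrix with positive off-diagonal entries. Then C has a real eigenvalue λ_dom such that every other eigenvalue μ of C satisfies Re μ < λ_dom, λ_dom is a simple root of the characteristic polynomial, and there is an eigenvector for λ_dom with all coordinates positive. -/
open Matrix Finset Polynomial

private lemma perron_exists {N : ℕ} (hN : 1 ≤ N) (A : Matrix (Fin N) (Fin N) ℝ)
    (hA : ∀ i j, 0 < A i j) :
    ∃ r : ℝ, 0 < r ∧ ∃ x : Fin N → ℝ, (∀ i, 0 < x i) ∧ A.mulVec x = r • x := by
  haveI : NeZero N := ⟨by omega⟩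
  haveI : Nonempty (Fin N) := ⟨⟨0, by omega⟩⟩
  obtain ⟨m, hm⟩ : ∃ m : ℝ, m = Finset.univ.inf' univ_nonempty
      (fun p : Fin N × Fin N => A p.1 p.2) := ⟨_, rfl⟩
  obtain ⟨M, hM⟩ : ∃ M : ℝ, M = Finset.univ.sup' univ_nonempty
      (fun p : Fin N × Fin N => A p.1 p.2) := ⟨_, rfl⟩
  have hm_pos : 0 < m := by
    rw [hm, Finset.lt_inf'_iff]; exact fun p _ => hA p.1 p.2
  have hm_le : ∀ i j, m ≤ A i j := fun i j => hm ▸ Finset.inf'_le _ (mem_univ (i, j))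
  have hM_le : ∀ i j, A i j ≤ M := fun i j => hM ▸ Finset.le_sup' (fun p : Fin N × Fin N => A p.1 p.2) (mem_univ (i, j))
  have hmM : m ≤ M := le_trans (hm_le default default) (hM_le default default)
  have hM_pos : 0 < M := lt_of_lt_of_le hm_pos hmM
  set δ : ℝ := m / (N * M) with hδ
  have hN_pos : (0:ℝ) < N := by positivity
  have hδ_pos : 0 < δ := by positivity
  set K : Set (Fin N → ℝ) :=
    (Set.univ.pi fun _ : Fin N => Set.Icc δ 1) ∩ {x | ∑ i, x i = 1} with hK
  have hKmem : ∀ {x : Fin N → ℝ}, x ∈ K → (∀ i, δ ≤ x i ∧ x i ≤ 1) ∧ ∑ i, x i = 1 := by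
    intro x hx
    exact ⟨fun i => hx.1 i (Set.mem_univ i), hx.2⟩
  have hKmem' : ∀ {x : Fin N → ℝ}, ((∀ i, δ ≤ x i ∧ x i ≤ 1) ∧ ∑ i, x i = 1) → x ∈ K := by
    intro x hx
    exact ⟨fun i _ => hx.1 i, hx.2⟩
  have hKc : IsCompact K := by
    apply (isCompact_univ_pi fun _ => isCompact_Icc).inter_right
    exact isClosed_eq (continuous_finset_sum _ fun i _ => continuous_apply i) continuous_const
  have hδN : δ ≤ 1 / N := by
    rw [hδ, div_le_div_iff₀ (by positivity) hN_pos]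
    nlinarith
  have hKne : K.Nonempty := by
    refine ⟨fun _ => 1 / N, hKmem' ⟨fun i => ⟨hδN, ?_⟩, ?_⟩⟩
    · rw [div_le_one hN_pos]; exact_mod_cast Nat.one_le_cast.mpr hN
    · have hN0 : (N:ℝ) ≠ 0 := ne_of_gt hN_pos
      simp [Finset.sum_const, Finset.card_univ]
  set g : (Fin N → ℝ) → ℝ :=
    fun x => Finset.univ.inf' univ_nonempty (fun i => A.mulVec x i / x i) with hg
  have hmv_cont : ∀ i, Continuous fun x : Fin N → ℝ => A.mulVec x i := by
    intro i
    simp only [Matrix.mulVec, dotProduct]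
    exact continuous_finset_sum _ fun j _ => continuous_const.mul (continuous_apply j)
  have hg_cont : ContinuousOn g K := by
    apply ContinuousOn.finset_inf'_apply
    intro i _
    apply ContinuousOn.div (hmv_cont i).continuousOn (continuous_apply i).continuousOn
    intro x hx
    exact ne_of_gt (lt_of_lt_of_le hδ_pos ((hKmem hx).1 i).1)
  obtain ⟨x, hxK, hxmax⟩ := hKc.exists_isMaxOn hKne hg_cont
  rw [isMaxOn_iff] at hxmax
  set r := g x with hr
  have hxi := (hKmem hxK).1
  have hxpos : ∀ i, 0 < x i := fun i => lt_of_lt_of_le hδ_pos (hxi i).1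
  have hxsum : ∑ i, x i = 1 := (hKmem hxK).2
  have humb : ∀ i, m ≤ A.mulVec x i ∧ A.mulVec x i ≤ M := by
    intro i
    constructor
    · calc m = ∑ j, m * x j := by rw [← Finset.mul_sum, hxsum, mul_one]
      _ ≤ ∑ j, A i j * x j := Finset.sum_le_sum fun j _ =>
          mul_le_mul_of_nonneg_right (hm_le i j) (le_of_lt (hxpos j))
      _ = A.mulVec x i := rfl
    · calc A.mulVec x i = ∑ j, A i j * x j := rfl
      _ ≤ ∑ j, M * x j := Finset.sum_le_sum fun j _ =>
          mul_le_mul_of_nonneg_right (hM_le i j) (le_of_lt (hxpos j))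
      _ = M := by rw [← Finset.mul_sum, hxsum, mul_one]
  have hrx : ∀ i, r * x i ≤ A.mulVec x i := by
    intro i
    have h1 : r ≤ A.mulVec x i / x i := hr ▸ Finset.inf'_le _ (mem_univ i)
    exact (le_div_iff₀ (hxpos i)).mp h1
  have hr_pos : 0 < r := by
    apply lt_of_lt_of_le hm_pos
    rw [hr, hg, Finset.le_inf'_iff]
    intro i _
    rw [le_div_iff₀ (hxpos i)]
    calc m * x i ≤ m * 1 := mul_le_mul_of_nonneg_left (hxi i).2 (le_of_lt hm_pos)
    _ = m := mul_one m
    _ ≤ A.mulVec x i := (humb i).1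
  set v : Fin N → ℝ := A.mulVec x - r • x with hvdef
  have hv_nonneg : ∀ i, 0 ≤ v i := by
    intro i
    simp only [hvdef, Pi.sub_apply, Pi.smul_apply, smul_eq_mul, sub_nonneg]
    exact hrx i
  by_cases hv : v = 0
  · exact ⟨r, hr_pos, x, hxpos, by rwa [← sub_eq_zero]⟩
  exfalso
  obtain ⟨j0, hj0⟩ := Function.ne_iff.mp hv
  have hvj0 : 0 < v j0 := lt_of_le_of_ne (hv_nonneg j0) (Ne.symm hj0)
  have hAv : ∀ i, 0 < A.mulVec v i := by
    intro i
    simp only [Matrix.mulVec, dotProduct]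
    apply Finset.sum_pos' (fun j _ => mul_nonneg (le_of_lt (hA i j)) (hv_nonneg j))
    exact ⟨j0, mem_univ _, mul_pos (hA i j0) hvj0⟩
  set u := A.mulVec x with hu
  have hu_pos : ∀ i, 0 < u i := fun i => lt_of_lt_of_le hm_pos (humb i).1
  set s := ∑ i, u i with hs
  have hs_pos : 0 < s := Finset.sum_pos (fun i _ => hu_pos i) univ_nonempty
  have hs_le : s ≤ N * M := by
    calc s ≤ ∑ _i : Fin N, M := Finset.sum_le_sum fun i _ => (humb i).2
    _ = N * M := by simp [Finset.sum_const, Finset.card_univ, nsmul_eq_mul]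
  set y : Fin N → ℝ := s⁻¹ • u with hy
  have hy_apply : ∀ i, y i = u i / s := by
    intro i; simp [hy, inv_mul_eq_div]
  have hy_pos : ∀ i, 0 < y i := fun i => by
    rw [hy_apply]; exact div_pos (hu_pos i) hs_pos
  have hyK : y ∈ K := by
    apply hKmem'
    refine ⟨fun i => ⟨?_, ?_⟩, ?_⟩
    · rw [hy_apply, hδ]
      exact div_le_div₀ (le_of_lt (hu_pos i)) (humb i).1 hs_pos hs_le
    · rw [hy_apply, div_le_one hs_pos]
      exact Finset.single_le_sum (fun j _ => le_of_lt (hu_pos j)) (mem_univ i)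
    · rw [hy]
      simp only [Pi.smul_apply, smul_eq_mul, ← Finset.mul_sum]
      exact inv_mul_cancel₀ (ne_of_gt hs_pos)
  have hAvu : ∀ i, A.mulVec v i = A.mulVec u i - r * u i := by
    intro i
    rw [hvdef, mulVec_sub, mulVec_smul, ← hu]
    simp
  have hyg : r < g y := by
    rw [hg, Finset.lt_inf'_iff]
    intro i _
    rw [lt_div_iff₀ (hy_pos i)]
    have h1 : A.mulVec y i = s⁻¹ * A.mulVec u i := by
      rw [hy, mulVec_smul]; simp
    rw [h1, hy_apply, div_eq_inv_mul, ← mul_assoc, mul_comm r s⁻¹, mul_assoc]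
    apply mul_lt_mul_of_pos_left _ (inv_pos.mpr hs_pos)
    have := hAv i
    rw [hAvu i] at this
    linarith
  exact absurd (hxmax y hyK) (not_le.mpr hyg)


private lemma sum_exchange {N : ℕ} (D : Matrix (Fin N) (Fin N) ℝ) (a b : Fin N → ℝ) :
    ∑ i, a i * (D *ᵥ b) i = ∑ j, (Dᵀ *ᵥ a) j * b j := by
  simp only [Matrix.mulVec, dotProduct, Finset.mul_sum, Finset.sum_mul,
    Matrix.transpose_apply]
  rw [Finset.sum_comm]
  exact Finset.sum_congr rfl fun j _ => Finset.sum_congr rfl fun i _ => by ring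

private lemma perron_unique {N : ℕ} (hN : 1 ≤ N) (A : Matrix (Fin N) (Fin N) ℝ)
    (hA : ∀ i j, 0 < A i j) {r : ℝ} {x : Fin N → ℝ} (hr : 0 < r)
    (hx : ∀ i, 0 < x i) (hAx : A.mulVec x = r • x)
    (y : Fin N → ℝ) (hy : A.mulVec y = r • y) :
    ∃ c : ℝ, y = c • x := by
  haveI : Nonempty (Fin N) := ⟨⟨0, by omega⟩⟩
  obtain ⟨T, hT⟩ : ∃ T : ℝ, T = Finset.univ.sup' univ_nonempty (fun i => y i / x i) := ⟨_, rfl⟩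
  obtain ⟨i0, _, hi0⟩ := Finset.exists_mem_eq_sup' univ_nonempty (fun i => y i / x i)
  refine ⟨T, ?_⟩
  set v : Fin N → ℝ := T • x - y with hvdef
  have hv_nonneg : ∀ i, 0 ≤ v i := by
    intro i
    have h1 : y i / x i ≤ T := hT ▸ Finset.le_sup' (fun i => y i / x i) (mem_univ i)
    have h2 : y i ≤ T * x i := (div_le_iff₀ (hx i)).mp h1
    simp only [hvdef, Pi.sub_apply, Pi.smul_apply, smul_eq_mul, sub_nonneg]
    exact h2
  have hvi0 : v i0 = 0 := by
    have : T = y i0 / x i0 := hT ▸ hi0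
    simp only [hvdef, Pi.sub_apply, Pi.smul_apply, smul_eq_mul, this]
    rw [div_mul_cancel₀ _ (ne_of_gt (hx i0))]
    ring
  have hAv : A.mulVec v = r • v := by
    rw [hvdef, mulVec_sub, mulVec_smul, hAx, hy, smul_sub, smul_comm T r x]
  by_cases hv : v = 0
  · have := sub_eq_zero.mp hv
    rw [← this]
  exfalso
  obtain ⟨j0, hj0⟩ := Function.ne_iff.mp hv
  have hvj0 : 0 < v j0 := lt_of_le_of_ne (hv_nonneg j0) (Ne.symm hj0)
  have h1 : 0 < A.mulVec v i0 := by
    simp only [Matrix.mulVec, dotProduct]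
    apply Finset.sum_pos' (fun j _ => mul_nonneg (le_of_lt (hA i0 j)) (hv_nonneg j))
    exact ⟨j0, mem_univ _, mul_pos (hA i0 j0) hvj0⟩
  rw [hAv] at h1
  simp only [Pi.smul_apply, smul_eq_mul, hvi0, mul_zero] at h1
  exact lt_irrefl 0 h1

private lemma eval_charpoly' {n : ℕ} (M : Matrix (Fin n) (Fin n) ℝ) (a : ℝ) :
    M.charpoly.eval a = (Matrix.diagonal (fun _ => a) - M).det := by
  rw [Matrix.charpoly, ← Polynomial.coe_evalRingHom, RingHom.map_det]
  congr 1
  ext i j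
  by_cases h : i = j
  · subst h
    simp [Matrix.charmatrix_apply_eq, Matrix.diagonal_apply_eq]
  · simp [Matrix.charmatrix_apply_ne _ _ _ h, Matrix.diagonal_apply_ne _ h]

private lemma charpoly_fin_one' (M : Matrix (Fin 1) (Fin 1) ℝ) :
    M.charpoly = Polynomial.X - Polynomial.C (M 0 0) := by
  rw [Matrix.charpoly, Matrix.det_fin_one]
  simp [Matrix.charmatrix_apply_eq]

set_option maxHeartbeats 2000000 in
set_option synthInstance.maxHeartbeats 400000 in
/-- Perron-type theorem for matrices with positive off-diagonal entries:
`C` has a real eigenvalue `λ_dom` with a positive eigenvector, such that every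
other complex eigenvalue `μ` satisfies `Re μ < λ_dom`, and `λ_dom` is a simple
root of the characteristic polynomial of `C`. -/
theorem stmt_15 {N : ℕ} (hN : 1 ≤ N) (C : Matrix (Fin N) (Fin N) ℝ)
    (hC : ∀ i j, i ≠ j → 0 < C i j) :
    ∃ lam : ℝ,
      (∃ x : Fin N → ℝ, (∀ i, 0 < x i) ∧ C.mulVec x = lam • x) ∧
      (∀ μ : ℂ, (∃ y : Fin N → ℂ, y ≠ 0 ∧
          (C.map (Complex.ofReal ·)).mulVec y = μ • y) → μ ≠ (lam : ℂ) →
        μ.re < lam) ∧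
      Polynomial.rootMultiplicity lam C.charpoly = 1 := by
  haveI : Nonempty (Fin N) := ⟨⟨0, by omega⟩⟩
  obtain ⟨t, ht⟩ : ∃ t : ℝ, t = 1 + Finset.univ.sup' univ_nonempty (fun i => |C i i|) :=
    ⟨_, rfl⟩
  have ht_diag : ∀ i, 0 < C i i + t := by
    intro i
    have h1 : |C i i| ≤ Finset.univ.sup' univ_nonempty (fun i => |C i i|) :=
      Finset.le_sup' (fun i => |C i i|) (mem_univ i)
    have h2 := neg_abs_le (C i i)
    rw [ht]; linarith
  set A : Matrix (Fin N) (Fin N) ℝ := C + t • 1 with hAdef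
  have hAentry : ∀ i j, A i j = C i j + if i = j then t else 0 := by
    intro i j
    by_cases h : i = j <;>
      simp [hAdef, Matrix.add_apply, Matrix.smul_apply, Matrix.one_apply, h]
  have hApos : ∀ i j, 0 < A i j := by
    intro i j
    rw [hAentry]
    by_cases h : i = j
    · subst h; simpa using ht_diag i
    · simpa [h] using hC i j h
  have hApos' : ∀ i j, 0 < Aᵀ i j := fun i j => hApos j i
  obtain ⟨r, hr_pos, x, hx_pos, hAx⟩ := perron_exists hN A hApos
  obtain ⟨r', hr'_pos, w, hw_pos, hAw⟩ := perron_exists hN Aᵀ hApos'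
  have hwx_pos : 0 < ∑ i, w i * x i :=
    Finset.sum_pos (fun i _ => mul_pos (hw_pos i) (hx_pos i)) univ_nonempty
  have hrr' : r' = r := by
    have h1 : ∑ i, w i * (A *ᵥ x) i = r * ∑ i, w i * x i := by
      rw [hAx]
      simp only [Pi.smul_apply, smul_eq_mul, Finset.mul_sum]
      exact Finset.sum_congr rfl fun i _ => by ring
    have h2 : ∑ i, w i * (A *ᵥ x) i = r' * ∑ i, w i * x i := by
      rw [sum_exchange, hAw]
      simp only [Pi.smul_apply, smul_eq_mul, Finset.mul_sum]
      exact Finset.sum_congr rfl fun i _ => by ring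
    have := h1 ▸ h2
    exact (mul_right_cancel₀ (ne_of_gt hwx_pos) this).symm
  subst hrr'
  obtain ⟨lam, hlam⟩ : ∃ lam : ℝ, lam = r' - t := ⟨_, rfl⟩
  have hCA : C = A - t • 1 := by rw [hAdef]; abel
  have hsmul_one_mulVec : ∀ z : Fin N → ℝ, (t • (1 : Matrix (Fin N) (Fin N) ℝ)) *ᵥ z = t • z := by
    intro z
    rw [Matrix.smul_mulVec, Matrix.one_mulVec]
  have hCx : C.mulVec x = lam • x := by
    rw [hCA, Matrix.sub_mulVec, hsmul_one_mulVec, hAx, hlam, sub_smul]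
  have hCw : Cᵀ.mulVec w = lam • w := by
    have : Cᵀ = Aᵀ - t • 1 := by
      rw [hCA]; rw [Matrix.transpose_sub, Matrix.transpose_smul, Matrix.transpose_one]
    rw [this, Matrix.sub_mulVec, hsmul_one_mulVec, hAw, hlam, sub_smul]
  refine ⟨lam, ⟨x, hx_pos, hCx⟩, ?_, ?_⟩
  · -- spectral dominance
    rintro μ ⟨y, hy0, hyμ⟩ hμne
    have hCy : ∀ i, ∑ j, (C i j : ℂ) * y j = μ * y i := by
      intro i
      have := congrFun hyμ i
      simpa [Matrix.mulVec, dotProduct, Matrix.map_apply, Pi.smul_apply,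
        smul_eq_mul] using this
    have hAy : ∀ i, ∑ j, ((A i j : ℝ) : ℂ) * y j = (μ + t) * y i := by
      intro i
      have hent : ∀ j, ((A i j : ℝ) : ℂ) = (C i j : ℂ) + if i = j then (t : ℂ) else 0 := by
        intro j
        rw [hAentry i j]
        by_cases h : i = j <;> simp [h]
      calc ∑ j, ((A i j : ℝ) : ℂ) * y j
          = ∑ j, ((C i j : ℂ) * y j + (if i = j then (t:ℂ) else 0) * y j) := by
            refine Finset.sum_congr rfl fun j _ => ?_
            rw [hent j]; ring
        _ = (∑ j, (C i j : ℂ) * y j) + ∑ j, (if i = j then (t:ℂ) else 0) * y j := by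
            rw [Finset.sum_add_distrib]
        _ = μ * y i + (t:ℂ) * y i := by
            rw [hCy i]
            congr 1
            simp only [ite_mul, zero_mul]
            rw [Finset.sum_ite_eq]
            simp
        _ = (μ + t) * y i := by ring
    set z : Fin N → ℝ := fun i => ‖y i‖ with hzdef
    have hz_nonneg : ∀ i, 0 ≤ z i := fun i => norm_nonneg _
    obtain ⟨i1, hi1⟩ := Function.ne_iff.mp hy0
    have hz1 : 0 < z i1 := by
      simp only [hzdef]
      exact norm_pos_iff.mpr hi1
    have key : ∀ i, ‖μ + t‖ * z i ≤ ∑ j, A i j * z j := by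
      intro i
      calc ‖μ + t‖ * z i = ‖(μ + t) * y i‖ := by
            rw [norm_mul]
        _ = ‖∑ j, ((A i j : ℝ) : ℂ) * y j‖ := by rw [hAy i]
        _ ≤ ∑ j, ‖((A i j : ℝ) : ℂ) * y j‖ := norm_sum_le _ _
        _ = ∑ j, A i j * z j := by
            refine Finset.sum_congr rfl fun j _ => ?_
            rw [norm_mul, Complex.norm_real, Real.norm_eq_abs, abs_of_pos (hApos i j)]
    set S := ∑ i, w i * z i with hS
    have hS_pos : 0 < S :=
      Finset.sum_pos' (fun i _ => mul_nonneg (le_of_lt (hw_pos i)) (hz_nonneg i))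
        ⟨i1, mem_univ _, mul_pos (hw_pos i1) hz1⟩
    have hsum : ‖μ + t‖ * S ≤ r' * S := by
      calc ‖μ + t‖ * S = ∑ i, w i * (‖μ + t‖ * z i) := by
            rw [hS, Finset.mul_sum]
            exact Finset.sum_congr rfl fun i _ => by ring
        _ ≤ ∑ i, w i * (∑ j, A i j * z j) := Finset.sum_le_sum fun i _ =>
            mul_le_mul_of_nonneg_left (key i) (le_of_lt (hw_pos i))
        _ = ∑ i, w i * (A *ᵥ z) i := rfl
        _ = ∑ j, (Aᵀ *ᵥ w) j * z j := sum_exchange A w z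
        _ = r' * S := by
            rw [hAw, hS, Finset.mul_sum]
            exact Finset.sum_congr rfl fun j _ => by
              simp only [Pi.smul_apply, smul_eq_mul]; ring
    have habs : ‖μ + t‖ ≤ r' := (mul_le_mul_iff_left₀ hS_pos).mp hsum
    have hre : μ.re + t ≤ r' := by
      have h1 : (μ + (t:ℂ)).re = μ.re + t := by simp
      have h2 := Complex.re_le_norm (μ + t)
      rw [h1] at h2
      linarith
    rcases lt_or_eq_of_le hre with h | h
    · rw [hlam]; linarith
    · exfalso
      have habs_eq : ‖μ + t‖ = μ.re + t := le_antisymm (h ▸ habs) (by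
        have h2 := Complex.re_le_norm (μ + t)
        simpa using h2)
      have him : μ.im = 0 := by
        have h3 := Complex.sq_norm (μ + t)
        rw [habs_eq] at h3
        have h4 : Complex.normSq (μ + t) = (μ.re + t)^2 + μ.im^2 := by
          simp [Complex.normSq_apply]
          ring
        nlinarith
      apply hμne
      have : μ.re = lam := by rw [hlam]; linarith
      apply Complex.ext
      · simpa using this
      · simpa using him
  · -- simplicity of the root
    have hx0 : x ≠ 0 := by
      intro h
      have := hx_pos ⟨0, by omega⟩
      rw [h] at this
      simp at this
    set f : (Fin N → ℝ) →ₗ[ℝ] (Fin N → ℝ) := Matrix.mulVecLin C with hfdef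
    have hf_apply : ∀ z, f z = C *ᵥ z := fun z => rfl
    have hchar : C.charpoly = LinearMap.charpoly f := by
      rw [← LinearMap.charpoly_toMatrix f (Pi.basisFun ℝ (Fin N)),
        LinearMap.toMatrix_eq_toMatrix', hfdef, ← Matrix.toLin'_apply', Matrix.toLin',
        LinearEquiv.apply_symm_apply]
    set φw : (Fin N → ℝ) →ₗ[ℝ] ℝ :=
      { toFun := fun v => ∑ i, w i * v i
        map_add' := fun a b => by
          simp only [Pi.add_apply, mul_add]
          rw [Finset.sum_add_distrib]
        map_smul' := fun c a => by
          simp only [Pi.smul_apply, smul_eq_mul, RingHom.id_apply, Finset.mul_sum]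
          exact Finset.sum_congr rfl fun i _ => by ring } with hφdef
    have hφ_apply : ∀ v, φw v = ∑ i, w i * v i := fun v => rfl
    set U : Submodule ℝ (Fin N → ℝ) := Submodule.span ℝ {x} with hUdef
    set V : Submodule ℝ (Fin N → ℝ) := LinearMap.ker φw with hVdef
    have hφx : φw x ≠ 0 := by rw [hφ_apply]; exact ne_of_gt hwx_pos
    have hUV_dis : Disjoint U V := by
      rw [Submodule.disjoint_def]
      intro u hu huV
      obtain ⟨c, rfl⟩ := Submodule.mem_span_singleton.mp hu
      have h1 : φw (c • x) = 0 := LinearMap.mem_ker.mp huV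
      rw [_root_.map_smul, smul_eq_mul] at h1
      rcases mul_eq_zero.mp h1 with h | h
      · rw [h, zero_smul]
      · exact absurd h hφx
    have hUV : IsCompl U V := by
      refine ⟨hUV_dis, codisjoint_iff.mpr ?_⟩
      rw [Submodule.eq_top_iff']
      intro zz
      refine Submodule.mem_sup.mpr ⟨(φw zz / φw x) • x, ?_, zz - (φw zz / φw x) • x, ?_, by abel⟩
      · exact Submodule.smul_mem _ _ (Submodule.mem_span_singleton_self x)
      · rw [hVdef, LinearMap.mem_ker, map_sub, _root_.map_smul, smul_eq_mul,
          div_mul_cancel₀ _ hφx, sub_self]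
    have hfU : ∀ u ∈ U, f u ∈ U := by
      intro u hu
      obtain ⟨c, rfl⟩ := Submodule.mem_span_singleton.mp hu
      rw [_root_.map_smul, hf_apply, hCx]
      exact Submodule.smul_mem _ _ (Submodule.smul_mem _ _ (Submodule.mem_span_singleton_self x))
    have hfV : ∀ v ∈ V, f v ∈ V := by
      intro v hv
      rw [hVdef, LinearMap.mem_ker] at hv ⊢
      rw [hφ_apply] at hv
      rw [hf_apply, hφ_apply, sum_exchange C w v, hCw]
      calc ∑ j, (lam • w) j * v j = lam * ∑ j, w j * v j := by
            rw [Finset.mul_sum]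
            exact Finset.sum_congr rfl fun j _ => by
              simp only [Pi.smul_apply, smul_eq_mul]; ring
      _ = 0 := by rw [hv, mul_zero]
    set e := Submodule.prodEquivOfIsCompl U V hUV with hedef
    set g := (f.restrict hfU).prodMap (f.restrict hfV) with hgdef
    have hfg : e.conj g = f := by
      apply LinearMap.ext
      intro zz
      obtain ⟨p, rfl⟩ := e.surjective zz
      rw [LinearEquiv.conj_apply]
      simp only [LinearMap.coe_comp, Function.comp_apply, LinearEquiv.coe_coe,
        LinearEquiv.symm_apply_apply]
      rw [hgdef, LinearMap.prodMap_apply, hedef]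
      simp only [Submodule.coe_prodEquivOfIsCompl', Prod.map_fst, Prod.map_snd,
        LinearMap.restrict_coe_apply]
      rw [map_add]
    have hsplit : LinearMap.charpoly f =
        (f.restrict hfU).charpoly * (f.restrict hfV).charpoly := by
      have h6 := LinearEquiv.charpoly_conj e g
      rw [hfg] at h6
      rw [h6, hgdef, LinearMap.charpoly_prodMap]
    have hfU_eq : f.restrict hfU = lam • LinearMap.id := by
      apply LinearMap.ext
      intro u
      apply Subtype.ext
      rw [LinearMap.restrict_coe_apply]
      obtain ⟨c, hc⟩ := Submodule.mem_span_singleton.mp u.2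
      have hcoe : ((lam • (LinearMap.id : U →ₗ[ℝ] U)) u : Fin N → ℝ) = lam • (u : Fin N → ℝ) := rfl
      rw [hcoe, ← hc, hf_apply, mulVec_smul, hCx, smul_comm]
    have hrankU : Module.finrank ℝ U = 1 := finrank_span_singleton hx0
    obtain ⟨bU⟩ : Nonempty (Module.Basis (Fin 1) ℝ U) := ⟨Module.finBasisOfFinrankEq ℝ U hrankU⟩
    have hcharU : (f.restrict hfU).charpoly = Polynomial.X - Polynomial.C lam := by
      rw [← LinearMap.charpoly_toMatrix (f.restrict hfU) bU, hfU_eq]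
      have h1 : LinearMap.toMatrix bU bU (lam • LinearMap.id) =
          lam • (1 : Matrix (Fin 1) (Fin 1) ℝ) := by
        rw [_root_.map_smul, LinearMap.toMatrix_id]
      rw [h1, charpoly_fin_one']
      congr 1
      simp [Matrix.smul_apply, Matrix.one_apply]
    have hcharV : ¬ (f.restrict hfV).charpoly.IsRoot lam := by
      intro hroot
      set d := Module.finrank ℝ V with hd
      set bV : Module.Basis (Fin d) ℝ V := Module.finBasis ℝ V with hbV
      set M2 := LinearMap.toMatrix bV bV (f.restrict hfV) with hM2
      have h1 : (f.restrict hfV).charpoly = M2.charpoly :=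
        (LinearMap.charpoly_toMatrix _ bV).symm
      rw [h1] at hroot
      have h2 : (Matrix.diagonal (fun _ : Fin d => lam) - M2).det = 0 := by
        rw [← eval_charpoly']
        exact hroot
      obtain ⟨v, hv0, hv⟩ := (Matrix.exists_mulVec_eq_zero_iff).mpr h2
      have hv' : M2 *ᵥ v = lam • v := by
        rw [Matrix.sub_mulVec] at hv
        have hdg : Matrix.diagonal (fun _ : Fin d => lam) *ᵥ v = lam • v := by
          ext i
          rw [Matrix.mulVec_diagonal]
          rfl
        rw [hdg] at hv
        exact (sub_eq_zero.mp hv).symm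
      set u : V := bV.equivFun.symm v with hu
      have hv_eq : bV.equivFun u = v := by rw [hu]; exact bV.equivFun.apply_symm_apply v
      have hu0 : u ≠ 0 := by
        intro h
        apply hv0
        rw [← hv_eq, h]
        exact _root_.map_zero _
      have hrep : ⇑(bV.repr u) = v := by
        funext i
        rw [← Module.Basis.equivFun_apply, hv_eq]
      have hfu : (f.restrict hfV) u = lam • u := by
        apply bV.repr.injective
        have h3 := LinearMap.toMatrix_mulVec_repr bV bV (f.restrict hfV) u
        rw [hrep, ← hM2, hv'] at h3
        refine Finsupp.ext fun i => ?_
        have h4 : bV.repr ((f.restrict hfV) u) i = lam * v i := by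
          have h5 := congrFun h3.symm i
          simpa using h5
        rw [h4, _root_.map_smul, Finsupp.smul_apply, smul_eq_mul]
        rw [show (bV.repr u) i = v i from congrFun hrep i]
      have hfu' : C *ᵥ (↑u : Fin N → ℝ) = lam • (↑u : Fin N → ℝ) := by
        have h4 := congrArg (Subtype.val) hfu
        rw [LinearMap.restrict_coe_apply] at h4
        rw [← hf_apply]
        exact h4
      have hAu : A *ᵥ (↑u : Fin N → ℝ) = r' • (↑u : Fin N → ℝ) := by
        rw [hAdef, Matrix.add_mulVec, hfu', hsmul_one_mulVec, ← add_smul, hlam,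
          sub_add_cancel]
      obtain ⟨c, hc⟩ := perron_unique hN A hApos hr_pos hx_pos hAx (↑u) hAu
      have huU : (↑u : Fin N → ℝ) ∈ U := by
        rw [hc]
        exact Submodule.smul_mem _ _ (Submodule.mem_span_singleton_self x)
      have h5 : (↑u : Fin N → ℝ) = 0 := Submodule.disjoint_def.mp hUV_dis _ huU u.2
      exact hu0 (Subtype.ext h5)
    have hne : (Polynomial.X - Polynomial.C lam) * (f.restrict hfV).charpoly ≠ 0 := by
      rw [← hcharU, ← hsplit]
      exact (LinearMap.charpoly_monic f).ne_zero
    rw [hchar, hsplit, hcharU, Polynomial.rootMultiplicity_mul hne,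
      Polynomial.rootMultiplicity_X_sub_C_self, Polynomial.rootMultiplicity_eq_zero hcharV]
end

section
/- Let C : ℝ → ℝ^{N×N} be continuous and T-periodic with positive off-diagonal entries, and let v be a globally positive solution with v(T) = e^{ΛT} v(0). Let C_min (resp. C_max) be the matrix whose (i,j)-entry is the minimum (resp. maximum) of C(t) i j over t ∈ [0,T]. Then λ_dom(C_min) ≤ Λ ≤ λ_dom(C_max), where λ_dom denotes the dominant real eigenvalue. -/
open Matrix Set

section Aux
open Finset

lemma cw_aux {m : Type*} [Fintype m] [DecidableEq m] [Nonempty m]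
    (A : Matrix m m ℝ) (hA : ∀ i j, 0 < A i j)
    (x : m → ℝ) (hx : ∀ i, 0 < x i) (μ : ℝ)
    (hμx : ∀ i, μ * x i ≤ A.mulVec x i) :
    ∃ (r : ℝ) (z : m → ℝ), z ≠ 0 ∧ A.mulVec z = r • z ∧ μ ≤ r := by
  classical
  have hmulVec : ∀ (y : m → ℝ) i, A.mulVec y i = ∑ j, A i j * y j := by
    intro y i; rfl
  set B : ℝ := ∑ i : m, ∑ j : m, A i j with hB
  set S : Set (ℝ × (m → ℝ)) :=
    {p | μ ≤ p.1 ∧ (∀ i, 0 ≤ p.2 i) ∧ (∑ i, p.2 i) = 1 ∧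
      ∀ i, p.1 * p.2 i ≤ ∑ j, A i j * p.2 j} with hS
  have hyle1 : ∀ (y : m → ℝ), (∀ i, 0 ≤ y i) → (∑ i, y i) = 1 → ∀ i, y i ≤ 1 := by
    intro y hy hsum i
    calc y i ≤ ∑ j, y j := Finset.single_le_sum (fun j _ => hy j) (mem_univ i)
    _ = 1 := hsum
  have hboundB : ∀ p ∈ S, p.1 ≤ B := by
    rintro ⟨ν, y⟩ ⟨_, hy, hsum, hineq⟩
    have h1 : ν = ∑ i, ν * y i := by rw [← Finset.mul_sum, hsum, mul_one]
    have h2 : ∑ i, ν * y i ≤ ∑ i, ∑ j, A i j * y j :=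
      Finset.sum_le_sum fun i _ => hineq i
    have h3 : ∑ i, ∑ j, A i j * y j ≤ B := by
      refine Finset.sum_le_sum fun i _ => Finset.sum_le_sum fun j _ => ?_
      calc A i j * y j ≤ A i j * 1 :=
        mul_le_mul_of_nonneg_left (hyle1 y hy hsum j) (hA i j).le
      _ = A i j := mul_one _
    linarith
  have hmemS : ∀ (ν : ℝ) (y : m → ℝ), μ ≤ ν → (∀ i, 0 ≤ y i) → (0 < ∑ i, y i) →
      (∀ i, ν * y i ≤ ∑ j, A i j * y j) → (ν, (∑ i, y i)⁻¹ • y) ∈ S := by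
    intro ν y hμν hy hsum hineq
    have hs : 0 < (∑ i, y i)⁻¹ := inv_pos.mpr hsum
    refine ⟨hμν, fun i => mul_nonneg hs.le (hy i), ?_, fun i => ?_⟩
    · simp only [Pi.smul_apply, smul_eq_mul, ← Finset.mul_sum]
      exact inv_mul_cancel₀ hsum.ne'
    · simp only [Pi.smul_apply, smul_eq_mul]
      calc ν * ((∑ i, y i)⁻¹ * y i) = (∑ i, y i)⁻¹ * (ν * y i) := by ring
      _ ≤ (∑ i, y i)⁻¹ * ∑ j, A i j * y j := mul_le_mul_of_nonneg_left (hineq i) hs.le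
      _ = ∑ j, A i j * ((∑ i, y i)⁻¹ * y j) := by
          rw [Finset.mul_sum]; exact Finset.sum_congr rfl fun j _ => by ring
  have hsumx : 0 < ∑ i, x i := Finset.sum_pos (fun i _ => hx i) univ_nonempty
  have hx0S : (μ, (∑ i, x i)⁻¹ • x) ∈ S :=
    hmemS μ x le_rfl (fun i => (hx i).le) hsumx (fun i => by rw [← hmulVec]; exact hμx i)
  have hSne : S.Nonempty := ⟨_, hx0S⟩
  have hc2 : ∀ i : m, Continuous fun p : ℝ × (m → ℝ) => p.2 i :=
    fun i => (continuous_apply i).comp continuous_snd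
  have hSclosed : IsClosed S := by
    rw [hS]
    simp only [Set.setOf_and, Set.setOf_forall]
    apply IsClosed.inter
    · exact isClosed_le continuous_const continuous_fst
    apply IsClosed.inter
    · exact isClosed_iInter fun i => isClosed_le continuous_const (hc2 i)
    apply IsClosed.inter
    · exact isClosed_eq (continuous_finset_sum _ fun i _ => hc2 i) continuous_const
    · exact isClosed_iInter fun i => isClosed_le
        (continuous_fst.mul (hc2 i))
        (continuous_finset_sum _ fun j _ => continuous_const.mul (hc2 j))
  have hSsub : S ⊆ Icc μ B ×ˢ Icc (0 : m → ℝ) 1 := by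
    rintro ⟨ν, y⟩ hp
    obtain ⟨h1, h2, h3, _⟩ := id hp
    exact ⟨⟨h1, hboundB _ hp⟩, fun i => h2 i, fun i => hyle1 y h2 h3 i⟩
  have hScompact : IsCompact S :=
    (isCompact_Icc.prod isCompact_Icc).of_isClosed_subset hSclosed hSsub
  set V : Set ℝ := Prod.fst '' S with hV
  have hVcompact : IsCompact V := hScompact.image continuous_fst
  have hVne : V.Nonempty := hSne.image _
  have hrV : sSup V ∈ V := hVcompact.sSup_mem hVne
  obtain ⟨⟨r, z⟩, hzS, hreq⟩ := hrV
  have hreq' : r = sSup V := hreq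
  obtain ⟨hμr, hz, hzsum, hzineq⟩ := hzS
  have hzne : z ≠ 0 := by
    intro h; rw [h] at hzsum; simp at hzsum
  refine ⟨r, z, hzne, ?_, hμr⟩
  by_contra hne
  set d : m → ℝ := fun i => (∑ j, A i j * z j) - r * z i with hd
  have hdnn : ∀ i, 0 ≤ d i := fun i => sub_nonneg.mpr (hzineq i)
  have hdne : ∃ k, 0 < d k := by
    by_contra h
    push_neg at h
    have hd0 : ∀ i, d i = 0 := fun i => le_antisymm (h i) (hdnn i)
    apply hne
    funext i
    have h1 : (∑ j, A i j * z j) - r * z i = 0 := hd0 i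
    have : A.mulVec z i = r * z i := by rw [hmulVec]; linarith
    simpa using this
  obtain ⟨k, hk⟩ := hdne
  have hzpos : ∃ j0, 0 < z j0 := by
    by_contra h
    push_neg at h
    have : ∑ i, z i ≤ 0 := Finset.sum_nonpos fun i _ => h i
    rw [hzsum] at this; linarith
  obtain ⟨j0, hj0⟩ := hzpos
  set y : m → ℝ := fun i => ∑ j, A i j * z j with hy
  have hypos : ∀ i, 0 < y i := by
    intro i
    have h1 : A i j0 * z j0 ≤ ∑ j, A i j * z j :=
      Finset.single_le_sum (fun j _ => mul_nonneg (hA i j).le (hz j)) (mem_univ j0)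
    exact lt_of_lt_of_le (mul_pos (hA i j0) hj0) h1
  have hkey : ∀ i, r * y i < ∑ j, A i j * y j := by
    intro i
    have hAd : 0 < ∑ j, A i j * d j := by
      have h1 : A i k * d k ≤ ∑ j, A i j * d j :=
        Finset.single_le_sum (fun j _ => mul_nonneg (hA i j).le (hdnn j)) (mem_univ k)
      exact lt_of_lt_of_le (mul_pos (hA i k) hk) h1
    have hsplit : ∑ j, A i j * y j = (∑ j, A i j * d j) + r * y i := by
      have h2 : ∀ j, A i j * y j = A i j * d j + r * (A i j * z j) := by
        intro j; simp only [hd]; ring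
      rw [Finset.sum_congr rfl fun j _ => h2 j, Finset.sum_add_distrib, ← Finset.mul_sum]
    linarith
  set ε := Finset.univ.inf' univ_nonempty (fun i => ((∑ j, A i j * y j) - r * y i) / y i)
    with hε
  have hεpos : 0 < ε := by
    rw [hε, Finset.lt_inf'_iff]
    intro i _
    exact div_pos (by linarith [hkey i]) (hypos i)
  have hεle : ∀ i, (r + ε) * y i ≤ ∑ j, A i j * y j := by
    intro i
    have h1 : ε ≤ ((∑ j, A i j * y j) - r * y i) / y i :=
      Finset.inf'_le _ (mem_univ i)
    have h2 : ε * y i ≤ (∑ j, A i j * y j) - r * y i := (le_div_iff₀ (hypos i)).mp h1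
    linarith
  have hsumy : 0 < ∑ i, y i := Finset.sum_pos (fun i _ => hypos i) univ_nonempty
  have hmem : (r + ε, (∑ i, y i)⁻¹ • y) ∈ S :=
    hmemS (r + ε) y (by linarith) (fun i => (hypos i).le) hsumy hεle
  have hle : r + ε ≤ sSup V := le_csSup hVcompact.bddAbove ⟨_, hmem, rfl⟩
  rw [← hreq'] at hle
  linarith

lemma eig_transpose {m : Type*} [Fintype m] [DecidableEq m]
    (A : Matrix m m ℝ) (μ : ℝ)
    (h : ∃ x : m → ℝ, x ≠ 0 ∧ A.mulVec x = μ • x) :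
    ∃ z : m → ℝ, z ≠ 0 ∧ Aᵀ.mulVec z = μ • z := by
  obtain ⟨x, hx0, hx⟩ := h
  have hdet : (A - μ • 1).det = 0 := by
    rw [← Matrix.exists_mulVec_eq_zero_iff]
    refine ⟨x, hx0, ?_⟩
    rw [Matrix.sub_mulVec, hx, Matrix.smul_mulVec, Matrix.one_mulVec, sub_self]
  have hdet' : (Aᵀ - μ • 1).det = 0 := by
    have e : Aᵀ - μ • 1 = (A - μ • 1)ᵀ := by
      rw [Matrix.transpose_sub, Matrix.transpose_smul, Matrix.transpose_one]
    rw [e, Matrix.det_transpose, hdet]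
  obtain ⟨z, hz0, hz⟩ := Matrix.exists_mulVec_eq_zero_iff.mpr hdet'
  refine ⟨z, hz0, ?_⟩
  rw [Matrix.sub_mulVec, Matrix.smul_mulVec, Matrix.one_mulVec, sub_eq_zero] at hz
  exact hz

end Aux

/-- "Trivial" estimate: if `v` is a globally positive Floquet solution of
`v' = C(t) v` with exponent `Λ`, and `C_min`, `C_max` are the entrywise
minimum and maximum of `C(t)` over `t ∈ [0,T]`, then
`λ_dom(C_min) ≤ Λ ≤ λ_dom(C_max)`. -/
theorem stmt_16 {N : ℕ} (T : ℝ) (hT : 0 < T)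
    (C : ℝ → Matrix (Fin N) (Fin N) ℝ)
    (hCcont : Continuous C) (hCper : ∀ t, C (t + T) = C t)
    (hCoffpos : ∀ t i j, i ≠ j → 0 < C t i j)
    (v : ℝ → Fin N → ℝ) (Λ : ℝ)
    (hv : ∀ t, HasDerivAt v ((C t).mulVec (v t)) t)
    (hvpos : ∀ t i, 0 < v t i)
    (hFloquet : v T = Real.exp (Λ * T) • v 0)
    (Cmin Cmax : Matrix (Fin N) (Fin N) ℝ)
    (hCmin : ∀ i j, IsLeast ((fun t => C t i j) '' Icc (0 : ℝ) T) (Cmin i j))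
    (hCmax : ∀ i j, IsGreatest ((fun t => C t i j) '' Icc (0 : ℝ) T) (Cmax i j))
    (lmin lmax : ℝ)
    (hlmin : IsGreatest {μ : ℝ | ∃ x : Fin N → ℝ, x ≠ 0 ∧ Cmin.mulVec x = μ • x} lmin)
    (hlmax : IsGreatest {μ : ℝ | ∃ x : Fin N → ℝ, x ≠ 0 ∧ Cmax.mulVec x = μ • x} lmax) :
    lmin ≤ Λ ∧ Λ ≤ lmax := by
  classical
  rcases N with _ | n
  · obtain ⟨x, hx0, _⟩ := hlmin.1
    exact absurd (funext fun i => i.elim0) hx0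
  -- basic continuity and derivative facts
  have hvc : ∀ (j : Fin (n+1)) (t : ℝ), HasDerivAt (fun s => v s j) ((C t).mulVec (v t) j) t :=
    fun j t => (hasDerivAt_pi.mp (hv t)) j
  have hvcont : ∀ j, Continuous fun t => v t j :=
    fun j => continuous_iff_continuousAt.mpr fun t => (hvc j t).continuousAt
  have hCentry : ∀ (i j : Fin (n+1)), Continuous fun t => C t i j :=
    fun i j => (continuous_apply j).comp ((continuous_apply i).comp hCcont)
  have hmv : ∀ (M : Matrix (Fin (n+1)) (Fin (n+1)) ℝ) (y : Fin (n+1) → ℝ) (i : Fin (n+1)),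
      M.mulVec y i = ∑ j, M i j * y j := fun M y i => rfl
  set e : ℝ → ℝ := fun t => Real.exp (-(Λ * t)) with he
  have hepos : ∀ t, 0 < e t := fun t => Real.exp_pos _
  have hecont : Continuous e :=
    Real.continuous_exp.comp (continuous_const.mul continuous_id).neg
  set g : Fin (n+1) → ℝ → ℝ := fun j t => e t * v t j with hg
  have hgpos : ∀ j t, 0 < g j t := fun j t => mul_pos (hepos t) (hvpos t j)
  have hgcont : ∀ j, Continuous (g j) := fun j => hecont.mul (hvcont j)
  have hederiv : ∀ t, HasDerivAt e (-Λ * e t) t := by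
    intro t
    have h1 : HasDerivAt (fun s : ℝ => -(Λ * s)) (-Λ) t := by
      simpa using ((hasDerivAt_id t).const_mul Λ).fun_neg
    simpa [he, mul_comm] using h1.exp
  have hgderiv : ∀ j t, HasDerivAt (g j)
      (-Λ * e t * v t j + e t * ((C t).mulVec (v t) j)) t :=
    fun j t => (hederiv t).mul (hvc j t)
  have hCvcont : ∀ j, Continuous fun t => (C t).mulVec (v t) j := by
    intro j
    have h1 : (fun t => (C t).mulVec (v t) j) = fun t => ∑ k, C t j k * v t k := rfl
    rw [h1]
    exact continuous_finset_sum _ fun k _ => (hCentry j k).mul (hvcont k)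
  have hDcont : ∀ j, Continuous fun t => -Λ * e t * v t j + e t * ((C t).mulVec (v t) j) :=
    fun j => ((continuous_const.mul hecont).mul (hvcont j)).add (hecont.mul (hCvcont j))
  have hgT : ∀ j, g j T = g j 0 := by
    intro j
    have hvT : v T j = Real.exp (Λ * T) * v 0 j := by rw [hFloquet]; simp
    simp only [hg, he, hvT]
    rw [← mul_assoc, ← Real.exp_add, neg_add_cancel, Real.exp_zero, one_mul,
      mul_zero, neg_zero, Real.exp_zero, one_mul]
  have hFTC : ∀ j, (∫ t in (0:ℝ)..T,
      (-Λ * e t * v t j + e t * ((C t).mulVec (v t) j))) = 0 := by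
    intro j
    rw [intervalIntegral.integral_eq_sub_of_hasDerivAt (fun t _ => hgderiv j t)
      ((hDcont j).intervalIntegrable 0 T), hgT j, sub_self]
  set x : Fin (n+1) → ℝ := fun j => ∫ t in (0:ℝ)..T, g j t with hx
  have hxpos : ∀ j, 0 < x j :=
    fun j => intervalIntegral.intervalIntegral_pos_of_pos
      ((hgcont j).intervalIntegrable 0 T) (hgpos j) hT
  have hsplit : ∀ j, (∫ t in (0:ℝ)..T, e t * ((C t).mulVec (v t) j)) = Λ * x j := by
    intro j
    have h1 := hFTC j
    rw [intervalIntegral.integral_add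
      (((continuous_const.fun_mul hecont).fun_mul (hvcont j)).intervalIntegrable 0 T)
      ((hecont.fun_mul (hCvcont j)).intervalIntegrable 0 T)] at h1
    have h2 : (∫ t in (0:ℝ)..T, -Λ * e t * v t j) = -Λ * x j := by
      have h3 : (fun t => -Λ * e t * v t j) = fun t => -Λ * g j t := by
        funext t; simp only [hg]; ring
      rw [h3, intervalIntegral.integral_const_mul]
    rw [h2] at h1
    linarith
  -- pointwise rewriting of the integrand
  have hconv : ∀ (j : Fin (n+1)) (t : ℝ),
      e t * ((C t).mulVec (v t) j) = ∑ k, C t j k * g k t := by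
    intro j t
    rw [hmv, Finset.mul_sum]
    exact Finset.sum_congr rfl fun k _ => by simp only [hg]; ring
  have hsumint : ∀ (M : Matrix (Fin (n+1)) (Fin (n+1)) ℝ) (j : Fin (n+1)),
      (∫ t in (0:ℝ)..T, ∑ k, M j k * g k t) = M.mulVec x j := by
    intro M j
    rw [intervalIntegral.integral_finset_sum
      (fun k _ => (continuous_const.fun_mul (hgcont k)).intervalIntegrable 0 T), hmv]
    exact Finset.sum_congr rfl fun k _ => by
      rw [intervalIntegral.integral_const_mul]
  have hhi : ∀ j, Λ * x j ≤ Cmax.mulVec x j := by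
    intro j
    rw [← hsplit j, ← hsumint Cmax j]
    apply intervalIntegral.integral_mono_on hT.le
      ((hecont.fun_mul (hCvcont j)).intervalIntegrable 0 T)
      ((continuous_finset_sum _ fun k _ =>
        continuous_const.fun_mul (hgcont k)).intervalIntegrable 0 T)
    intro t ht
    rw [hconv j t]
    exact Finset.sum_le_sum fun k _ =>
      mul_le_mul_of_nonneg_right ((hCmax j k).2 ⟨t, ht, rfl⟩) (hgpos k t).le
  have hlo : ∀ j, Cmin.mulVec x j ≤ Λ * x j := by
    intro j
    rw [← hsplit j, ← hsumint Cmin j]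
    apply intervalIntegral.integral_mono_on hT.le
      ((continuous_finset_sum _ fun k _ =>
        continuous_const.fun_mul (hgcont k)).intervalIntegrable 0 T)
      ((hecont.fun_mul (hCvcont j)).intervalIntegrable 0 T)
    intro t ht
    rw [hconv j t]
    exact Finset.sum_le_sum fun k _ =>
      mul_le_mul_of_nonneg_right ((hCmin j k).2 ⟨t, ht, rfl⟩) (hgpos k t).le
  -- lower bound
  have hCminoff : ∀ i j, i ≠ j → 0 < Cmin i j := by
    intro i j hij
    obtain ⟨t, ht, hteq⟩ := (hCmin i j).1
    rw [← hteq]; exact hCoffpos t i j hij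
  obtain ⟨z, hz0, hz⟩ := eig_transpose Cmin lmin hlmin.1
  set c : ℝ := |lmin| + ∑ i, |Cmin i i| with hc
  have habs_nn : (0:ℝ) ≤ ∑ i, |Cmin i i| := Finset.sum_nonneg fun i _ => abs_nonneg _
  have hcl : 0 ≤ lmin + c := by
    have h1 := neg_abs_le lmin
    rw [hc]; linarith
  have hBnn : ∀ i j : Fin (n+1), 0 ≤ Cmin j i + (if i = j then c else 0) := by
    intro i j
    by_cases hij : i = j
    · subst hij
      rw [if_pos rfl]
      have h1 : |Cmin i i| ≤ ∑ k, |Cmin k k| :=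
        Finset.single_le_sum (f := fun k => |Cmin k k|) (fun k _ => abs_nonneg _)
          (Finset.mem_univ i)
      have h2 := neg_abs_le (Cmin i i)
      have h3 := abs_nonneg lmin
      rw [hc]; linarith
    · simp only [if_neg hij, add_zero]
      exact (hCminoff j i fun h => hij h.symm).le
  set w : Fin (n+1) → ℝ := fun i => |z i| with hw
  have hwnn : ∀ i, 0 ≤ w i := fun i => abs_nonneg _
  have hTz : ∀ y : Fin (n+1) → ℝ, ∀ i, Cminᵀ.mulVec y i = ∑ j, Cmin j i * y j :=
    fun y i => rfl
  have hkey : ∀ i, lmin * w i ≤ ∑ j, Cmin j i * w j := by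
    intro i
    have h2 : Cminᵀ.mulVec z i = lmin * z i := by rw [hz]; simp
    have h3 : ∑ j, (if i = j then c else 0) * z j = c * z i := by
      simp
    have h1 : (lmin + c) * z i = ∑ j, (Cmin j i + (if i = j then c else 0)) * z j := by
      rw [Finset.sum_congr rfl fun j _ => add_mul (Cmin j i) _ (z j),
        Finset.sum_add_distrib, ← hTz z i, h2, h3]
      ring
    have h3w : ∑ j, (if i = j then c else 0) * w j = c * w i := by
      simp
    have h6 : ∑ j, (Cmin j i + (if i = j then c else 0)) * w j
        = (∑ j, Cmin j i * w j) + c * w i := by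
      rw [Finset.sum_congr rfl fun j _ => add_mul (Cmin j i) _ (w j),
        Finset.sum_add_distrib, h3w]
    have h4 : (lmin + c) * w i = |(lmin + c) * z i| := by
      rw [abs_mul, abs_of_nonneg hcl]
    have h5 : |∑ j, (Cmin j i + (if i = j then c else 0)) * z j|
        ≤ ∑ j, (Cmin j i + (if i = j then c else 0)) * w j := by
      refine (Finset.abs_sum_le_sum_abs _ _).trans (le_of_eq ?_)
      refine Finset.sum_congr rfl fun j _ => ?_
      rw [abs_mul, abs_of_nonneg (hBnn i j)]
    rw [h1] at h4
    rw [h6] at h5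
    rw [← h1] at h5
    rw [h1] at h5
    nlinarith [h4, h5]
  have hwx : 0 < ∑ i, w i * x i := by
    obtain ⟨i0, hi0⟩ : ∃ i, z i ≠ 0 := by
      by_contra h; push_neg at h; exact hz0 (funext h)
    refine Finset.sum_pos' (fun i _ => mul_nonneg (hwnn i) (hxpos i).le)
      ⟨i0, Finset.mem_univ i0, mul_pos (abs_pos.mpr hi0) (hxpos i0)⟩
  have hlower : lmin ≤ Λ := by
    have h1 : lmin * (∑ i, w i * x i) ≤ Λ * (∑ i, w i * x i) := by
      calc lmin * ∑ i, w i * x i = ∑ i, (lmin * w i) * x i := by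
            rw [Finset.mul_sum]
            exact Finset.sum_congr rfl fun i _ => by ring
      _ ≤ ∑ i, (∑ j, Cmin j i * w j) * x i :=
            Finset.sum_le_sum fun i _ =>
              mul_le_mul_of_nonneg_right (hkey i) (hxpos i).le
      _ = ∑ j, w j * (∑ i, Cmin j i * x i) := by
            have e1 : ∀ i : Fin (n+1), (∑ j, Cmin j i * w j) * x i
                = ∑ j, Cmin j i * w j * x i := fun i => Finset.sum_mul _ _ _
            rw [Finset.sum_congr rfl fun i _ => e1 i, Finset.sum_comm]
            refine Finset.sum_congr rfl fun j _ => ?_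
            rw [Finset.mul_sum]
            exact Finset.sum_congr rfl fun i _ => by ring
      _ ≤ ∑ j, w j * (Λ * x j) :=
            Finset.sum_le_sum fun j _ => by
              have := hlo j
              rw [hmv] at this
              exact mul_le_mul_of_nonneg_left this (hwnn j)
      _ = Λ * ∑ j, w j * x j := by
            rw [Finset.mul_sum]
            exact Finset.sum_congr rfl fun j _ => by ring
    exact le_of_mul_le_mul_right h1 hwx
  -- upper bound
  have hCmaxoff : ∀ i j, i ≠ j → 0 < Cmax i j := fun i j hij =>
    lt_of_lt_of_le (hCoffpos 0 i j hij) ((hCmax i j).2 ⟨0, ⟨le_rfl, hT.le⟩, rfl⟩)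
  set c' : ℝ := 1 + ∑ i, |Cmax i i| with hc'
  set M : Matrix (Fin (n+1)) (Fin (n+1)) ℝ := Cmax + c' • 1 with hM
  have hMpos : ∀ i j, 0 < M i j := by
    intro i j
    by_cases hij : i = j
    · subst hij
      have h1 : |Cmax i i| ≤ ∑ k, |Cmax k k| :=
        Finset.single_le_sum (f := fun k => |Cmax k k|) (fun k _ => abs_nonneg _)
          (Finset.mem_univ i)
      have h2 := neg_abs_le (Cmax i i)
      simp only [hM, Matrix.add_apply, Matrix.smul_apply, Matrix.one_apply_eq,
        smul_eq_mul, mul_one]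
      rw [hc']; linarith
    · simp only [hM, Matrix.add_apply, Matrix.smul_apply, Matrix.one_apply_ne hij,
        smul_eq_mul, mul_zero, add_zero]
      exact hCmaxoff i j hij
  have hMmv : ∀ y : Fin (n+1) → ℝ, M.mulVec y = Cmax.mulVec y + c' • y := by
    intro y
    rw [hM, Matrix.add_mulVec, Matrix.smul_mulVec, Matrix.one_mulVec]
  have hMx : ∀ i, (Λ + c') * x i ≤ M.mulVec x i := by
    intro i
    rw [hMmv]
    have h1 := hhi i
    simp only [Pi.add_apply, Pi.smul_apply, smul_eq_mul]
    linarith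
  obtain ⟨r, z', hz'0, hz', hμr⟩ := cw_aux M hMpos x hxpos (Λ + c') hMx
  have hupper : Λ ≤ lmax := by
    have hzeig : Cmax.mulVec z' = (r - c') • z' := by
      rw [hMmv] at hz'
      have h1 : Cmax.mulVec z' = r • z' - c' • z' := by
        rw [← hz']; abel
      rw [h1, ← sub_smul]
    have h2 : r - c' ≤ lmax := hlmax.2 ⟨z', hz'0, hzeig⟩
    linarith
  exact ⟨hlower, hupper⟩
end

section
/- Let C : ℝ → ℝ^{N×N} be continuous and T-periodic with positive off-diagonal entries, and let v be a globally positive solution of v' = C(t)v with v(T) = e^{ΛT} v(0). Then Λ ≤ (1/T) ∫_0^T λ_max(C^S(t)) dt, where C^S(t) = (C(t)+C(t)ᵀ)/2 and λ_max denotes the largest eigenvalue of a symmetric matrix. -/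
open Matrix RealInnerProductSpace

lemma rayleigh_le_max {N : ℕ} (A : Matrix (Fin N) (Fin N) ℝ) (hA : A.IsHermitian) (μ : ℝ)
    (hμ : ∀ ν (x : Fin N → ℝ), x ≠ 0 → A.mulVec x = ν • x → ν ≤ μ) (x : Fin N → ℝ) :
    ∑ i, A.mulVec x i * x i ≤ μ * ∑ i, x i ^ 2 := by
  classical
  have hS : (Matrix.toEuclideanLin A).IsSymmetric :=
    Matrix.isHermitian_iff_isSymmetric.mp hA
  have hn : Module.finrank ℝ (EuclideanSpace ℝ (Fin N)) = N := by
    simp [finrank_euclideanSpace]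
  let b := hS.eigenvectorBasis hn
  set Tl := Matrix.toEuclideanLin A with hTl
  have hev : ∀ i, hS.eigenvalues hn i ≤ μ := by
    intro i
    refine hμ _ (WithLp.equiv 2 _ (b i)) ?_ ?_
    · have := (b.toBasis.ne_zero i)
      simpa [b] using this
    · have h1 := hS.apply_eigenvectorBasis hn i
      exact congrArg (WithLp.equiv 2 (Fin N → ℝ)) h1
  set y : EuclideanSpace ℝ (Fin N) := (WithLp.equiv 2 _).symm x with hy
  set c : Fin N → ℝ := fun i => b.repr y i with hc
  have hTy : ∀ i, b.repr (Tl y) i = hS.eigenvalues hn i * c i := fun i =>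
    hS.eigenvectorBasis_apply_self_apply hn y i
  have h1 : (inner ℝ y (Tl y) : ℝ) = ∑ i, hS.eigenvalues hn i * (c i) ^ 2 := by
    rw [← b.repr.inner_map_map y (Tl y)]
    simp only [PiLp.inner_apply, RCLike.inner_apply, conj_trivial, hTy]
    exact Finset.sum_congr rfl fun i _ => by ring
  have h2 : (inner ℝ y y : ℝ) = ∑ i, (c i) ^ 2 := by
    rw [← b.repr.inner_map_map y y]
    simp only [PiLp.inner_apply, RCLike.inner_apply, conj_trivial]
    exact Finset.sum_congr rfl fun i _ => by ring
  have h3 : (inner ℝ y y : ℝ) = ∑ i, x i ^ 2 := by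
    simp only [PiLp.inner_apply, RCLike.inner_apply, conj_trivial]
    exact Finset.sum_congr rfl fun i _ => by simp [hy]; ring
  have h4 : (inner ℝ y (Tl y) : ℝ) = ∑ i, A.mulVec x i * x i := by
    simp only [PiLp.inner_apply, RCLike.inner_apply, conj_trivial]
    refine Finset.sum_congr rfl fun i _ => ?_
    have h : Tl y i = A.mulVec x i := congrFun (Matrix.ofLp_toEuclideanLin_apply A y) i
    rw [h]
    rfl
  calc ∑ i, A.mulVec x i * x i = ∑ i, hS.eigenvalues hn i * (c i) ^ 2 := by rw [← h4, h1]
    _ ≤ ∑ i, μ * (c i) ^ 2 :=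
        Finset.sum_le_sum fun i _ => mul_le_mul_of_nonneg_right (hev i) (sq_nonneg _)
    _ = μ * ∑ i, (c i) ^ 2 := (Finset.mul_sum _ _ _).symm
    _ = μ * ∑ i, x i ^ 2 := by rw [← h2, h3]

lemma sym_quad {N : ℕ} (C : Matrix (Fin N) (Fin N) ℝ) (x : Fin N → ℝ) :
    ∑ i, (((1:ℝ)/2) • (C + Cᵀ)).mulVec x i * x i = ∑ i, C.mulVec x i * x i := by
  simp only [Matrix.mulVec, dotProduct, Matrix.smul_apply, Matrix.add_apply,
    Matrix.transpose_apply, smul_eq_mul, Finset.sum_mul, Finset.mul_sum, add_mul, mul_add]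
  have hswap : ∑ i, ∑ j, (1:ℝ)/2 * C j i * x j * x i
      = ∑ i, ∑ j, (1:ℝ)/2 * C i j * x j * x i := by
    rw [Finset.sum_comm]
    exact Finset.sum_congr rfl fun i _ => Finset.sum_congr rfl fun j _ => by ring
  calc ∑ i, ∑ j, ((1:ℝ)/2 * C i j * x j * x i + 1/2 * C j i * x j * x i)
      = (∑ i, ∑ j, (1:ℝ)/2 * C i j * x j * x i)
        + ∑ i, ∑ j, (1:ℝ)/2 * C j i * x j * x i := by
        rw [← Finset.sum_add_distrib]
        exact Finset.sum_congr rfl fun i _ => Finset.sum_add_distrib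
    _ = ∑ i, ∑ j, C i j * x j * x i := by
        rw [hswap, ← Finset.sum_add_distrib]
        refine Finset.sum_congr rfl fun i _ => ?_
        rw [← Finset.sum_add_distrib]
        exact Finset.sum_congr rfl fun j _ => by ring


/-- Upper estimate: if `v` is a globally positive Floquet solution of
`v' = C(t) v` with exponent `Λ`, then
`Λ ≤ (1/T) ∫₀ᵀ λ_max(Cˢ(t)) dt`, where `Cˢ(t) = (C(t)+C(t)ᵀ)/2`. -/
theorem stmt_17 {N : ℕ} (T : ℝ) (hT : 0 < T)
    (C : ℝ → Matrix (Fin N) (Fin N) ℝ)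
    (hCcont : Continuous C) (hCper : ∀ t, C (t + T) = C t)
    (hCoffpos : ∀ t i j, i ≠ j → 0 < C t i j)
    (v : ℝ → Fin N → ℝ) (Λ : ℝ)
    (hv : ∀ t, HasDerivAt v ((C t).mulVec (v t)) t)
    (hvpos : ∀ t i, 0 < v t i)
    (hFloquet : v T = Real.exp (Λ * T) • v 0)
    (lam : ℝ → ℝ)
    (hlam : ∀ t, IsGreatest {μ : ℝ | ∃ x : Fin N → ℝ, x ≠ 0 ∧
      (((1 : ℝ)/2) • (C t + (C t)ᵀ)).mulVec x = μ • x} (lam t))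
    (hlamint : IntervalIntegrable lam MeasureTheory.volume 0 T) :
    Λ ≤ (1 / T) * ∫ t in (0 : ℝ)..T, lam t := by
  rcases Nat.eq_zero_or_pos N with hN | hN
  · subst hN
    obtain ⟨x, hx, -⟩ := (hlam 0).1
    exact absurd (Subsingleton.elim x 0) hx
  haveI : Nonempty (Fin N) := Fin.pos_iff_nonempty.mp hN
  have hvcont : Continuous v := by
    rw [continuous_iff_continuousAt]; exact fun t => (hv t).continuousAt
  set φ : ℝ → ℝ := fun t => ∑ i, v t i ^ 2 with hφ
  have hφpos : ∀ t, 0 < φ t := fun t =>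
    Finset.sum_pos (fun i _ => pow_pos (hvpos t i) 2) Finset.univ_nonempty
  set D : ℝ → ℝ := fun t => ∑ i, (C t).mulVec (v t) i * v t i with hD
  have hφd : ∀ t, HasDerivAt φ (2 * D t) t := by
    intro t
    have h : ∀ i : Fin N, HasDerivAt (fun s => v s i) ((C t).mulVec (v t) i) t :=
      hasDerivAt_pi.mp (hv t)
    have hsum := HasDerivAt.fun_sum (u := Finset.univ)
      (fun (i : Fin N) _ => (h i).pow 2)
    refine HasDerivAt.congr_deriv hsum ?_
    rw [hD, Finset.mul_sum]
    exact Finset.sum_congr rfl fun i _ => by ring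
  have hCij : ∀ i j, Continuous fun t => C t i j := fun i j =>
    (continuous_apply j).comp ((continuous_apply i).comp hCcont)
  have hvi : ∀ i, Continuous fun t => v t i := fun i => (continuous_apply i).comp hvcont
  have hDcont : Continuous D := by
    rw [hD]
    refine continuous_finset_sum _ fun i _ => Continuous.mul ?_ (hvi i)
    simp only [Matrix.mulVec, dotProduct]
    exact continuous_finset_sum _ fun j _ => (hCij i j).mul (hvi j)
  have hφcont : Continuous φ := continuous_finset_sum _ fun i _ => (hvi i).pow 2
  have hψd : ∀ t, HasDerivAt (fun s => Real.log (φ s)) (2 * D t / φ t) t :=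
    fun t => (hφd t).log (ne_of_gt (hφpos t))
  have hkey : ∀ t, 2 * D t / φ t ≤ 2 * lam t := by
    intro t
    have hA : (((1:ℝ)/2) • (C t + (C t)ᵀ)).IsHermitian := by
      unfold Matrix.IsHermitian
      ext i j
      simp [Matrix.conjTranspose_apply, Matrix.smul_apply, Matrix.add_apply,
        Matrix.transpose_apply]
      ring
    have hray := rayleigh_le_max _ hA (lam t)
      (fun ν x hx hvx => (hlam t).2 ⟨x, hx, hvx⟩) (v t)
    rw [sym_quad] at hray
    rw [div_le_iff₀ (hφpos t)]
    calc 2 * D t ≤ 2 * (lam t * φ t) := by rw [hD]; linarith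
      _ = 2 * lam t * φ t := by ring
  have hcont2 : Continuous fun t => 2 * D t / φ t :=
    (continuous_const.mul hDcont).div hφcont fun t => ne_of_gt (hφpos t)
  have hFTC : ∫ t in (0:ℝ)..T, 2 * D t / φ t = Real.log (φ T) - Real.log (φ 0) :=
    intervalIntegral.integral_eq_sub_of_hasDerivAt (fun t _ => hψd t)
      (hcont2.intervalIntegrable 0 T)
  have hmono : ∫ t in (0:ℝ)..T, 2 * D t / φ t ≤ ∫ t in (0:ℝ)..T, 2 * lam t :=
    intervalIntegral.integral_mono_on hT.le (hcont2.intervalIntegrable 0 T)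
      (hlamint.const_mul 2) fun t _ => hkey t
  have hφT : φ T = Real.exp (Λ * T) ^ 2 * φ 0 := by
    rw [hφ]
    simp only [hFloquet, Pi.smul_apply, smul_eq_mul, mul_pow, ← Finset.mul_sum]
  have hlog : Real.log (φ T) - Real.log (φ 0) = 2 * (Λ * T) := by
    rw [hφT, Real.log_mul (by positivity) (ne_of_gt (hφpos 0)), Real.log_pow,
      Real.log_exp]
    push_cast; ring
  have h2lam : ∫ t in (0:ℝ)..T, 2 * lam t = 2 * ∫ t in (0:ℝ)..T, lam t :=
    intervalIntegral.integral_const_mul 2 lam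
  have hfin : Λ * T ≤ ∫ t in (0:ℝ)..T, lam t := by
    have := hmono
    rw [hFTC, hlog, h2lam] at this
    linarith
  have := (le_div_iff₀ hT).mpr hfin
  rw [one_div]
  linarith [this, (div_eq_inv_mul (∫ t in (0:ℝ)..T, lam t) T)]
end

section
/- Let C : ℝ → ℝ^{N×N} be continuous T-periodic with positive off-diagonal entries, and let Λ be the principal Floquet exponent (the logarithmic growth rate of a globally positive Floquet solution v with v(T) = e^{ΛT}v(0)). Then Λ ≥ (1/(NT)) ∫_0^T ( trace C(t) + 2 ∑_{j<k} √(C(t) j k · C(t) k j) ) dt. -/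
open Matrix Finset

theorem aux_pt {N : ℕ} (a : Matrix (Fin N) (Fin N) ℝ)
    (ha : ∀ i j, i ≠ j → 0 < a i j) (w : Fin N → ℝ) (hw : ∀ i, 0 < w i) :
    a.trace + 2 * ∑ p ∈ Finset.univ.filter (fun p : Fin N × Fin N => p.1 < p.2),
        Real.sqrt (a p.1 p.2 * a p.2 p.1)
      ≤ ∑ i, a.mulVec w i / w i := by
  classical
  set f : Fin N × Fin N → ℝ := fun p => a p.1 p.2 * w p.2 / w p.1 with hf
  have h1 : ∑ i, a.mulVec w i / w i = ∑ p : Fin N × Fin N, f p := by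
    rw [← Finset.univ_product_univ, Finset.sum_product]
    simp [Matrix.mulVec, dotProduct, Finset.sum_div, f]
  rw [h1]
  rw [← Finset.sum_filter_add_sum_filter_not Finset.univ (fun p : Fin N × Fin N => p.1 = p.2) f]
  have hdiag : ∑ p ∈ Finset.univ.filter (fun p : Fin N × Fin N => p.1 = p.2), f p = a.trace := by
    rw [Finset.sum_filter]
    rw [← Finset.univ_product_univ, Finset.sum_product]
    simp [f, Matrix.trace, Matrix.diag, div_mul_eq_mul_div, mul_div_assoc,
      mul_div_cancel_right₀, (hw _).ne']
  rw [hdiag]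
  have hsplit : ∑ p ∈ Finset.univ.filter (fun p : Fin N × Fin N => ¬ p.1 = p.2), f p
      = ∑ p ∈ Finset.univ.filter (fun p : Fin N × Fin N => p.1 < p.2), (f p + f p.swap) := by
    rw [← Finset.sum_filter_add_sum_filter_not
      (Finset.univ.filter (fun p : Fin N × Fin N => ¬ p.1 = p.2))
      (fun p : Fin N × Fin N => p.1 < p.2) f, Finset.sum_add_distrib]
    congr 1
    · apply Finset.sum_congr _ (fun _ _ => rfl)
      rw [Finset.filter_filter]
      apply Finset.filter_congr
      intro p _
      simp only [ne_eq, and_iff_right_iff_imp]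
      exact fun h => ne_of_lt h
    · apply Finset.sum_nbij' (fun p => Prod.swap p) (fun p => Prod.swap p) <;>
        simp_all [lt_iff_le_and_ne, ne_eq] <;> intros <;> omega
  rw [hsplit, Finset.mul_sum]
  have key : ∀ p ∈ Finset.univ.filter (fun p : Fin N × Fin N => p.1 < p.2),
      2 * Real.sqrt (a p.1 p.2 * a p.2 p.1) ≤ f p + f p.swap := by
    intro p hp
    simp only [Finset.mem_filter] at hp
    have hne : p.1 ≠ p.2 := ne_of_lt hp.2
    have h1 : 0 < f p := by
      have := ha p.1 p.2 hne
      have := hw p.1; have := hw p.2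
      positivity
    have h2 : 0 < f p.swap := by
      have := ha p.2 p.1 hne.symm
      have := hw p.1; have := hw p.2
      positivity
    have hprod : f p * f p.swap = a p.1 p.2 * a p.2 p.1 := by
      have e1 := (hw p.1).ne'
      have e2 := (hw p.2).ne'
      simp only [f, Prod.fst_swap, Prod.snd_swap]
      field_simp
    rw [← hprod, Real.sqrt_mul h1.le]
    nlinarith [Real.sq_sqrt h1.le, Real.sq_sqrt h2.le, Real.sqrt_nonneg (f p),
      Real.sqrt_nonneg (f p.swap), sq_nonneg (Real.sqrt (f p) - Real.sqrt (f p.swap))]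
  exact add_le_add le_rfl (Finset.sum_le_sum key)

/-- Lower estimate via the functional `V(u) = u₁⋯u_N`: if `v` is a globally
positive Floquet solution of `v' = C(t) v` with exponent `Λ`, then
`Λ ≥ (1/(NT)) ∫₀ᵀ (trace C(t) + 2 ∑_{j<k} √(C(t) j k · C(t) k j)) dt`. -/
theorem stmt_18 {N : ℕ} (hN : 1 ≤ N) (T : ℝ) (hT : 0 < T)
    (C : ℝ → Matrix (Fin N) (Fin N) ℝ)
    (hCcont : Continuous C) (hCper : ∀ t, C (t + T) = C t)
    (hCoffpos : ∀ t i j, i ≠ j → 0 < C t i j)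
    (v : ℝ → Fin N → ℝ) (Λ : ℝ)
    (hv : ∀ t, HasDerivAt v ((C t).mulVec (v t)) t)
    (hvpos : ∀ t i, 0 < v t i)
    (hFloquet : v T = Real.exp (Λ * T) • v 0) :
    (1 / (N * T)) * ∫ t in (0 : ℝ)..T,
        ((C t).trace +
          2 * ∑ p ∈ Finset.univ.filter (fun p : Fin N × Fin N => p.1 < p.2),
            Real.sqrt (C t p.1 p.2 * C t p.2 p.1)) ≤ Λ := by
  classical
  have hvcont : Continuous v := by
    rw [continuous_iff_continuousAt]; exact fun t => (hv t).continuousAt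
  have hvicont : ∀ i : Fin N, Continuous (fun t => v t i) :=
    fun i => (continuous_apply i).comp hvcont
  have hCijcont : ∀ i j : Fin N, Continuous (fun t => C t i j) :=
    fun i j => (continuous_apply j).comp ((continuous_apply i).comp hCcont)
  set W : ℝ → ℝ := fun t => ∑ i, Real.log (v t i) with hWdef
  set W' : ℝ → ℝ := fun t => ∑ i, (C t).mulVec (v t) i / v t i with hW'def
  have hW' : ∀ t, HasDerivAt W (W' t) t := by
    intro t
    apply HasDerivAt.fun_sum
    intro i _
    have h1 : HasDerivAt (fun t => v t i) ((C t).mulVec (v t) i) t :=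
      (hasDerivAt_pi.mp (hv t)) i
    have := (Real.hasDerivAt_log (hvpos t i).ne').comp t h1
    simpa [div_eq_inv_mul, Function.comp_def] using this
  have hW'cont : Continuous W' := by
    apply continuous_finset_sum
    intro i _
    apply Continuous.div
    · simp only [Matrix.mulVec, dotProduct]
      exact continuous_finset_sum _ fun j _ => (hCijcont i j).mul (hvicont j)
    · exact hvicont i
    · exact fun t => (hvpos t i).ne'
  set g : ℝ → ℝ := fun t => (C t).trace +
      2 * ∑ p ∈ Finset.univ.filter (fun p : Fin N × Fin N => p.1 < p.2),
        Real.sqrt (C t p.1 p.2 * C t p.2 p.1) with hgdef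
  have hgcont : Continuous g := by
    apply Continuous.add
    · simp only [Matrix.trace, Matrix.diag]
      exact continuous_finset_sum _ fun i _ => hCijcont i i
    · exact continuous_const.mul (continuous_finset_sum _ fun p _ =>
        ((hCijcont p.1 p.2).mul (hCijcont p.2 p.1)).sqrt)
  have hle : ∀ t, g t ≤ W' t := fun t =>
    aux_pt (C t) (hCoffpos t) (v t) (hvpos t)
  have hint : ∫ t in (0:ℝ)..T, g t ≤ ∫ t in (0:ℝ)..T, W' t :=
    intervalIntegral.integral_mono_on hT.le (hgcont.intervalIntegrable _ _)
      (hW'cont.intervalIntegrable _ _) (fun t _ => hle t)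
  have hftc : ∫ t in (0:ℝ)..T, W' t = W T - W 0 :=
    intervalIntegral.integral_eq_sub_of_hasDerivAt (fun t _ => hW' t)
      (hW'cont.intervalIntegrable _ _)
  have hWeq : W T - W 0 = N * (Λ * T) := by
    have : ∀ i : Fin N, Real.log (v T i) = Λ * T + Real.log (v 0 i) := by
      intro i
      rw [hFloquet]
      simp [Real.log_mul (Real.exp_pos _).ne' (hvpos 0 i).ne', Real.log_exp]
    simp [hWdef, this, Finset.sum_add_distrib]
  have hNT : (0:ℝ) < N * T := by
    have : (0:ℝ) < N := by exact_mod_cast hN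
    positivity
  rw [one_div, inv_mul_le_iff₀ hNT]
  calc ∫ t in (0:ℝ)..T, g t ≤ W T - W 0 := by rw [← hftc]; exact hint
    _ = Λ * (N * T) := by rw [hWeq]; ring
    _ ≤ N * T * Λ := by rw [mul_comm]
end

section
/- Let C : ℝ → ℝ^{N×N} be continuous T-periodic with positive off-diagonal entries, and let Λ be the principal Floquet exponent of u' = C(t)u. Then Λ ≥ (1/T) ∫_0^T min_i ∑_j C(t) i j dt, i.e. the time-average of the minimal row sum is a lower bound for Λ. -/
open Matrix Finset

/-- Lower estimate via the functional `V(u) = u₁ + … + u_N`: if `v` is a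
globally positive Floquet solution of `v' = C(t) v` with exponent `Λ`, then
`Λ ≥ (1/T) ∫₀ᵀ min_i ∑_j C(t) i j dt`. -/
theorem stmt_19 {N : ℕ} (hN : 0 < N) (T : ℝ) (hT : 0 < T)
    (C : ℝ → Matrix (Fin N) (Fin N) ℝ)
    (hCcont : Continuous C) (hCper : ∀ t, C (t + T) = C t)
    (hCoffpos : ∀ t i j, i ≠ j → 0 < C t i j)
    (v : ℝ → Fin N → ℝ) (Λ : ℝ)
    (hv : ∀ t, HasDerivAt v ((C t).mulVec (v t)) t)
    (hvpos : ∀ t i, 0 < v t i)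
    (hFloquet : v T = Real.exp (Λ * T) • v 0) :
    (1 / T) * ∫ t in (0 : ℝ)..T,
        (Finset.univ.inf' (Finset.univ_nonempty_iff.mpr
            (Fin.pos_iff_nonempty.mp hN)) fun i => ∑ j, C t i j) ≤ Λ := by
  classical
  have ne : (Finset.univ : Finset (Fin N)).Nonempty :=
    Finset.univ_nonempty_iff.mpr (Fin.pos_iff_nonempty.mp hN)
  -- componentwise derivatives and continuity
  have hvi : ∀ i t, HasDerivAt (fun s => v s i) ((C t).mulVec (v t) i) t :=
    fun i t => hasDerivAt_pi.1 (hv t) i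
  have hvc : ∀ i, Continuous fun t => v t i :=
    fun i => continuous_iff_continuousAt.2 fun t => (hvi i t).continuousAt
  have hCe : ∀ i j, Continuous fun t => C t i j :=
    fun i j => (continuous_apply j).comp ((continuous_apply i).comp hCcont)
  have hmulvec : ∀ x i, (C x).mulVec (v x) i = ∑ j, C x i j * v x j := by
    intro x i; simp [Matrix.mulVec, dotProduct]
  -- the minimal row sum and its primitive
  set m : ℝ → ℝ := fun t => Finset.univ.inf' ne fun i => ∑ j, C t i j with hmdef
  have hmc : Continuous m :=
    Continuous.finset_inf'_apply ne fun i _ => continuous_finset_sum _ fun j _ => hCe i j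
  set M : ℝ → ℝ := fun t => ∫ s in (0:ℝ)..t, m s with hMdef
  have hM : ∀ t : ℝ, HasDerivAt M (m t) t :=
    fun t => (hmc.integral_hasStrictDerivAt 0 t).hasDerivAt
  set w0 : ℝ := Finset.univ.inf' ne (v 0) with hw0def
  have hw0pos : 0 < w0 := by
    obtain ⟨i, _, hi⟩ := Finset.exists_mem_eq_inf' ne (v 0)
    rw [hw0def, hi]; exact hvpos 0 i
  -- the (negated) minimal component
  set f : ℝ → ℝ := fun t => Finset.univ.sup' ne fun i => -v t i with hfdef
  have hfc : Continuous f :=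
    Continuous.finset_sup'_apply ne fun i _ => (hvc i).neg
  -- key estimate via the fencing theorem
  have key : ∀ ε : ℝ, 0 < ε → f T ≤ -w0 * Real.exp (M T - ε * T) := by
    intro ε hε
    set B : ℝ → ℝ := fun t => -w0 * Real.exp (M t - ε * t) with hBdef
    set B' : ℝ → ℝ := fun t => (m t - ε) * B t with hB'def
    have hB : ∀ x : ℝ, HasDerivAt B (B' x) x := by
      intro x
      have h1 : HasDerivAt (fun t : ℝ => M t - ε * t) (m x - ε) x := by
        have := (hM x).sub (((hasDerivAt_id x).const_mul ε))
        exact this.congr_deriv (by simp)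
      have h2 := h1.exp.const_mul (-w0)
      exact h2.congr_deriv (by show _ = (m x - ε) * (-w0 * Real.exp (M x - ε * x)); ring)
    have hA : ∀ x : ℝ, (Finset.univ.filter fun i => -v x i = f x).Nonempty := by
      intro x
      obtain ⟨i, _, hi⟩ := Finset.exists_mem_eq_sup' ne fun i => -v x i
      exact ⟨i, Finset.mem_filter.mpr ⟨Finset.mem_univ i, hi.symm⟩⟩
    set f' : ℝ → ℝ := fun x =>
      (Finset.univ.filter fun i => -v x i = f x).sup' (hA x)
        fun i => -((C x).mulVec (v x) i) with hf'def
    have main : ∀ ⦃x⦄, x ∈ Set.Icc 0 T → f x ≤ B x := by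
      refine image_le_of_liminf_slope_right_lt_deriv_boundary (f' := f')
        hfc.continuousOn ?_ ?_ hB ?_
      · -- liminf slope estimate
        intro x hx r hr
        have hfreq : ∀ᶠ z in nhdsWithin x (Set.Ioi x), slope f x z < r := by
          have hall : ∀ i : Fin N,
              ∀ᶠ z in nhdsWithin x (Set.Ioi x), -v z i < f x + r * (z - x) := by
            intro i
            by_cases hiA : -v x i = f x
            · -- i attains the max at x
              have hle : -((C x).mulVec (v x) i) ≤ f' x :=
                Finset.le_sup' (fun k => -((C x).mulVec (v x) k))
                  (Finset.mem_filter.mpr ⟨Finset.mem_univ i, hiA⟩)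
              have hdr : -((C x).mulVec (v x) i) < r := lt_of_le_of_lt hle hr
              have hder : HasDerivAt (fun t => -v t i) (-((C x).mulVec (v x) i)) x :=
                (hvi i x).neg
              have hts := hasDerivAt_iff_tendsto_slope.1 hder
              have hev : ∀ᶠ z in nhdsWithin x {x}ᶜ,
                  slope (fun t => -v t i) x z < r :=
                hts (Iio_mem_nhds hdr)
              have hev' : ∀ᶠ z in nhdsWithin x (Set.Ioi x),
                  slope (fun t => -v t i) x z < r :=
                hev.filter_mono (nhdsWithin_mono x fun z hz => ne_of_gt hz)
              have hmem : ∀ᶠ z in nhdsWithin x (Set.Ioi x), z ∈ Set.Ioi x :=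
                self_mem_nhdsWithin
              filter_upwards [hev', hmem] with z hz hzx
              have hzx' : (0:ℝ) < z - x := sub_pos.2 hzx
              rw [slope_def_field] at hz
              have := (div_lt_iff₀ hzx').1 hz
              have hfx : -v x i = f x := hiA
              nlinarith [this]
            · -- i does not attain the max at x: use continuity
              have hle0 : -v x i ≤ f x :=
                Finset.le_sup' (fun k => -v x k) (Finset.mem_univ i)
              have hlt : -v x i < f x := lt_of_le_of_ne hle0 hiA
              have hc1 : ContinuousAt (fun z => -v z i) x := ((hvc i).neg).continuousAt
              have hc2 : ContinuousAt (fun z : ℝ => f x + r * (z - x)) x := by fun_prop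
              have hlt' : (fun z => -v z i) x < (fun z : ℝ => f x + r * (z - x)) x := by
                simpa using hlt
              have hev : ∀ᶠ z in nhds x, -v z i < f x + r * (z - x) :=
                hc1.eventually_lt hc2 hlt'
              exact eventually_nhdsWithin_of_eventually_nhds hev
          have hcomb : ∀ᶠ z in nhdsWithin x (Set.Ioi x),
              ∀ i : Fin N, -v z i < f x + r * (z - x) := Filter.eventually_all.2 hall
          have hmem : ∀ᶠ z in nhdsWithin x (Set.Ioi x), z ∈ Set.Ioi x :=
            self_mem_nhdsWithin
          filter_upwards [hcomb, hmem] with z hz hzx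
          have hzx' : (0:ℝ) < z - x := sub_pos.2 hzx
          have hfz : f z < f x + r * (z - x) :=
            (Finset.sup'_lt_iff ne).2 fun i _ => hz i
          rw [slope_def_field]
          rw [div_lt_iff₀ hzx']
          linarith
        exact hfreq.frequently
      · -- initial condition
        have hB0 : B 0 = -w0 := by
          simp [hBdef, hMdef]
        rw [hB0]
        refine Finset.sup'_le ne _ fun i _ => ?_
        have : w0 ≤ v 0 i := Finset.inf'_le (v 0) (Finset.mem_univ i)
        linarith
      · -- strict inequality at contact points
        intro x hx hfx
        refine (Finset.sup'_lt_iff (hA x)).2 fun i hi => ?_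
        have hiA : -v x i = f x := (Finset.mem_filter.mp hi).2
        have hvix : 0 < v x i := hvpos x i
        have hBneg : B x < 0 := by rw [← hfx, ← hiA]; linarith
        have hsum : (∑ j, C x i j) * v x i ≤ (C x).mulVec (v x) i := by
          rw [hmulvec, Finset.sum_mul]
          refine Finset.sum_le_sum fun j _ => ?_
          rcases eq_or_ne j i with rfl | hj
          · exact le_rfl
          · have hCpos : 0 < C x i j := hCoffpos x i j (Ne.symm hj)
            have hvj : v x i ≤ v x j := by
              have h1 : -v x j ≤ f x :=
                Finset.le_sup' (fun k => -v x k) (Finset.mem_univ j)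
              rw [← hiA] at h1
              linarith
            exact mul_le_mul_of_nonneg_left hvj hCpos.le
        have hmle : m x ≤ ∑ j, C x i j := Finset.inf'_le _ (Finset.mem_univ i)
        have h1 : m x * v x i ≤ (C x).mulVec (v x) i :=
          le_trans (mul_le_mul_of_nonneg_right hmle hvix.le) hsum
        have hvB : v x i = -B x := by rw [← hfx, ← hiA]; ring
        have : -((C x).mulVec (v x) i) ≤ m x * B x := by
          rw [hvB] at h1; nlinarith
        have h2 : m x * B x < (m x - ε) * B x := by nlinarith
        exact lt_of_le_of_lt this h2
    exact main ⟨hT.le, le_rfl⟩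
  -- translate back
  obtain ⟨i0, _, hi0⟩ := Finset.exists_mem_eq_inf' ne (v 0)
  have hvT : v T i0 = Real.exp (Λ * T) * w0 := by
    rw [hFloquet]; simp [hw0def, hi0.symm]
  have hfT : -Real.exp (Λ * T) * w0 ≤ f T := by
    have h1 : -v T i0 ≤ f T :=
      Finset.le_sup' (fun i => -v T i) (Finset.mem_univ i0)
    calc -Real.exp (Λ * T) * w0 = -v T i0 := by rw [hvT]; ring
    _ ≤ f T := h1
  have hMT : M T ≤ Λ * T := by
    refine le_of_forall_pos_le_add fun δ hδ => ?_
    have hε : 0 < δ / T := div_pos hδ hT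
    have h1 := le_trans hfT (key (δ / T) hε)
    have h2 : Real.exp (M T - δ / T * T) ≤ Real.exp (Λ * T) := by
      have := (mul_le_mul_iff_right₀ hw0pos).1 (by nlinarith : w0 * Real.exp (M T - δ / T * T) ≤ w0 * Real.exp (Λ * T))
      exact this
    have h3 : M T - δ / T * T ≤ Λ * T := Real.exp_le_exp.1 h2
    have hTT : δ / T * T = δ := div_mul_cancel₀ δ hT.ne'
    linarith [h3, hTT ▸ h3]
  show 1 / T * M T ≤ Λ
  rw [one_div, inv_mul_le_iff₀ hT]
  linarith [hMT]
end
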